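/- arXiv:2010.04490 — 6 statements merged into one kernel-verified Lean document; each statement's English description precedes it below -/
import Mathlib

section
/- For every set X of n distinct integers contained in [1, 4n⁴·6^{n/2}] (with n sufficiently large), there exists a prime p ≤ 2n³ such that p does not divide x - y for any pair of distinct x, y ∈ X. -/
/-!
If every prime `p ≤ 2n³` divided some difference `x - y`, the primorial of `2n³` would divide
the nonzero integer `∏_{x ≠ y} (x - y)`. All differences are below `3ⁿ`, so this product is at
most `3^{n³}` in absolute value, giving `θ(2n³) ≤ n³ log 3`. Since `log 3 < 2 log 2`, this
contradicts Chebyshev's lower bound `θ(x) ≥ (log 2 - o(1)) x`.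
-/

open Finset Filter Real Asymptotics Chebyshev

theorem Chebyshev.eventually_mul_le_theta {c : ℝ} (hc : c < log 2) :
    ∀ᶠ x in atTop, c * x ≤ θ x := by
  have hshift : (fun x : ℝ ↦ x + 2) =O[atTop] id :=
    (isBigO_refl _ _).add (isLittleO_const_id_atTop 2).isBigO
  have hlog : (fun x : ℝ ↦ log (x + 2)) =o[atTop] id :=
    (isLittleO_log_id_atTop.comp_tendsto
      (tendsto_atTop_add_const_right _ 2 tendsto_id)).trans_isBigO hshift
  have hsqrt : (fun x : ℝ ↦ 2 * √x * log x) =o[atTop] id := by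
    have h := ((isBigO_refl sqrt atTop).mul_isLittleO
      (isLittleO_log_rpow_atTop one_half_pos)).const_mul_left 2
    refine (h.congr_left fun x ↦ by ring).congr' EventuallyEq.rfl ?_
    filter_upwards [eventually_ge_atTop 0] with x hx
    rw [← sqrt_eq_rpow, mul_self_sqrt hx, id]
  -- `theta_ge'` bounds `θ x` below by `x log 2` minus exactly this error term.
  have herr := ((isLittleO_const_id_atTop (log 2)).add (hlog.add hsqrt)).bound (sub_pos.2 hc)
  filter_upwards [herr, eventually_ge_atTop 1] with x hx hx1
  rw [id, norm_of_nonneg (by positivity : 0 ≤ x)] at hx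
  linarith [le_norm_self (log 2 + (log (x + 2) + 2 * √x * log x)), theta_ge' hx1]

theorem Chebyshev.theta_natCast_le_of_primorial_le {K b m : ℕ} (h : primorial K ≤ b ^ m) :
    θ K ≤ m * log b := by
  rw [theta_eq_log_primorial, Nat.floor_natCast, ← log_pow]
  exact log_le_log (by exact_mod_cast primorial_pos K) (by exact_mod_cast h)

namespace Finset

variable {X : Finset ℤ}

theorem prod_offDiag_sub_ne_zero (X : Finset ℤ) : ∏ q ∈ X.offDiag, (q.1 - q.2) ≠ 0 :=
  prod_ne_zero_iff.2 fun _ hq ↦ sub_ne_zero.2 (mem_offDiag.1 hq).2.2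

theorem primorial_dvd_natAbs_prod_offDiag_sub {K : ℕ}
    (h : ∀ p : ℕ, p.Prime → p ≤ K → ∃ x ∈ X, ∃ y ∈ X, x ≠ y ∧ (p : ℤ) ∣ x - y) :
    primorial K ∣ (∏ q ∈ X.offDiag, (q.1 - q.2)).natAbs := by
  refine prod_primes_dvd _ (fun p hp ↦ (mem_filter.1 hp).2.prime) fun p hp ↦ ?_
  obtain ⟨hpK, hp⟩ := mem_filter.1 hp
  obtain ⟨x, hx, y, hy, hxy, hpxy⟩ := h p hp (Nat.lt_succ_iff.1 (mem_range.1 hpK))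
  exact Int.natCast_dvd.1 <| hpxy.trans <|
    dvd_prod_of_mem (fun q : ℤ × ℤ ↦ q.1 - q.2) (mem_offDiag.2 ⟨hx, hy, hxy⟩ : (x, y) ∈ X.offDiag)

theorem natAbs_prod_offDiag_sub_le {B : ℕ} (h : ∀ x ∈ X, ∀ y ∈ X, |x - y| ≤ B) :
    (∏ q ∈ X.offDiag, (q.1 - q.2)).natAbs ≤ B ^ #X.offDiag := by
  refine (map_prod Int.natAbsHom _ _).trans_le (prod_le_pow_card _ _ _ fun q hq ↦ ?_)
  obtain ⟨hx, hy, -⟩ := mem_offDiag.1 hq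
  have := h _ hx _ hy
  rw [Int.abs_eq_natAbs] at this
  exact_mod_cast this

theorem primorial_le_pow_of_forall_prime_dvd_sub {K B : ℕ}
    (hX : ∀ x ∈ X, 0 ≤ x ∧ x ≤ B)
    (hdvd : ∀ p : ℕ, p.Prime → p ≤ K → ∃ x ∈ X, ∃ y ∈ X, x ≠ y ∧ (p : ℤ) ∣ x - y) :
    primorial K ≤ B ^ #X.offDiag := by
  have hdiff : ∀ x ∈ X, ∀ y ∈ X, |x - y| ≤ B := fun x hx y hy ↦
    abs_sub_le_of_nonneg_of_le (hX x hx).1 (hX x hx).2 (hX y hy).1 (hX y hy).2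
  exact (Nat.le_of_dvd (Int.natAbs_pos.2 (prod_offDiag_sub_ne_zero X))
    (primorial_dvd_natAbs_prod_offDiag_sub hdvd)).trans (natAbs_prod_offDiag_sub_le hdiff)

theorem card_offDiag_le_sq {α : Type*} (s : Finset α) : #s.offDiag ≤ #s ^ 2 :=
  (offDiag_card s).trans_le ((Nat.sub_le _ _).trans_eq (sq _).symm)

end Finset

theorem eventually_four_mul_pow_four_mul_six_rpow_le :
    ∀ᶠ n : ℕ in atTop, 4 * (n : ℝ) ^ 4 * (6 : ℝ) ^ ((n : ℝ) / 2) ≤ 3 ^ n := by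
  have hr : 1 < 3 / √6 := by
    rw [one_lt_div (by positivity), sqrt_lt' (by norm_num)]
    norm_num
  filter_upwards [((isLittleO_pow_const_const_pow_of_one_lt (R := ℝ) 4 hr).const_mul_left 4).bound
    one_pos] with n hn
  rw [rpow_div_two_eq_sqrt _ (by norm_num), rpow_natCast]
  rw [norm_of_nonneg (by positivity), norm_of_nonneg (by positivity), one_mul, div_pow,
    le_div_iff₀ (by positivity)] at hn
  exact hn

theorem exists_prime_dividing_no_difference :
    ∃ N : ℕ, ∀ n : ℕ, N ≤ n → ∀ X : Finset ℤ, X.card = n →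
      (∀ x ∈ X, 1 ≤ x ∧ (x : ℝ) ≤ 4 * (n : ℝ) ^ 4 * (6 : ℝ) ^ ((n : ℝ) / 2)) →
      ∃ p : ℕ, p.Prime ∧ p ≤ 2 * n ^ 3 ∧
        ∀ x ∈ X, ∀ y ∈ X, x ≠ y → ¬ ((p : ℤ) ∣ x - y) := by
  obtain ⟨c, hc3, hc2⟩ : ∃ c, log 3 / 2 < c ∧ c < log 2 := exists_between <| by
    have h4 : log 4 = 2 * log 2 := by rw [show (4 : ℝ) = 2 ^ 2 by norm_num, log_pow]; norm_num
    linarith [log_lt_log (by norm_num : (0 : ℝ) < 3) (by norm_num : (3 : ℝ) < 4)]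
  have hK : Tendsto (fun n : ℕ ↦ ((2 * n ^ 3 : ℕ) : ℝ)) atTop atTop :=
    tendsto_natCast_atTop_atTop.comp <| tendsto_atTop_mono
      (fun n ↦ (Nat.le_self_pow three_ne_zero n).trans (Nat.le_mul_of_pos_left _ two_pos))
      tendsto_id
  obtain ⟨N, hN⟩ := eventually_atTop.1 <| eventually_four_mul_pow_four_mul_six_rpow_le.and <|
    (hK.eventually (eventually_mul_le_theta hc2)).and (eventually_ge_atTop 1)
  refine ⟨N, fun n hn X hcard hX ↦ ?_⟩
  obtain ⟨hsize, htheta, hn1⟩ := hN n hn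
  by_contra! hdvd
  have hX' : ∀ x ∈ X, 0 ≤ x ∧ x ≤ (3 ^ n : ℕ) := fun x hx ↦
    ⟨by linarith [(hX x hx).1], by exact_mod_cast (hX x hx).2.trans hsize⟩
  have hprim := (primorial_le_pow_of_forall_prime_dvd_sub hX' hdvd).trans
    (Nat.pow_le_pow_right (by positivity) (card_offDiag_le_sq X))
  rw [hcard, ← pow_mul] at hprim
  have hlog := theta_natCast_le_of_primorial_le hprim
  have hn3 : (0 : ℝ) < n ^ 3 := by positivity
  push_cast at htheta hlog
  nlinarith [mul_lt_mul_of_pos_right hc3 hn3]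
end

section
/- Let X be a set of n distinct integers contained in [1, 4n⁴·6^{n/2}], with n sufficiently large. Then there exists a subset X' ⊆ X with |X'| ≥ n/2 and an injective compression (a map c with c(x) - 2c(y) + c(z) = 0 whenever x - 2y + z = 0 for x,y,z ∈ X') of X' into {1, ..., n³}. -/
lemma aux_pow16 : ∀ n : ℕ, 64 ≤ n → 16 * n ^ 8 ≤ 2 ^ n := by
  intro n
  induction n with
  | zero => omega
  | succ m ih =>
    intro h
    rcases Nat.lt_or_ge m 64 with hm | hm
    · have : m = 63 := by omega
      subst this
      norm_num
    · have h1 : 16 * m ^ 8 ≤ 2 ^ m := ih hm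
      have key : (m + 1) ^ 8 ≤ 2 * m ^ 8 := by
        have h12 : 12 * (m + 1) ≤ 13 * m := by omega
        have h3 : (12:ℕ) ^ 8 * (m + 1) ^ 8 ≤ 13 ^ 8 * m ^ 8 := by
          calc (12:ℕ) ^ 8 * (m + 1) ^ 8 = (12 * (m + 1)) ^ 8 := by ring
          _ ≤ (13 * m) ^ 8 := Nat.pow_le_pow_left h12 8
          _ = 13 ^ 8 * m ^ 8 := by ring
        have h4 : (13:ℕ) ^ 8 * m ^ 8 ≤ 12 ^ 8 * (2 * m ^ 8) := by
          calc (13:ℕ) ^ 8 * m ^ 8 ≤ (12 ^ 8 * 2) * m ^ 8 :=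
                Nat.mul_le_mul_right _ (by norm_num)
          _ = 12 ^ 8 * (2 * m ^ 8) := by ring
        exact Nat.le_of_mul_le_mul_left (h3.trans h4) (by norm_num)
      calc 16 * (m + 1) ^ 8 ≤ 16 * (2 * m ^ 8) := Nat.mul_le_mul_left _ key
      _ = 2 * (16 * m ^ 8) := by ring
      _ ≤ 2 * 2 ^ m := Nat.mul_le_mul_left _ h1
      _ = 2 ^ (m + 1) := by rw [pow_succ]; ring

lemma int_eq_zero_of_dvd (T u : ℤ) (hd : T ∣ u) (h1 : -T < u) (h2 : u < T) : u = 0 := by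
  by_contra h
  have habs : T ≤ |u| := Int.le_of_dvd (abs_pos.mpr h) ((dvd_abs T u).mpr hd)
  have : |u| < T := abs_lt.mpr ⟨h1, h2⟩
  omega

lemma exists_good_prime (n : ℕ) (hn : 64 ≤ n) (X : Finset ℤ) (hcard : X.card = n)
    (hbd : ∀ x ∈ X, 1 ≤ x ∧ x ≤ (6:ℤ) ^ n) :
    ∃ p : ℕ, p.Prime ∧ p ≤ 2 * n ^ 3 ∧ ∀ x ∈ X, ∀ y ∈ X, x ≠ y → ¬((p : ℤ) ∣ x - y) := by
  by_contra hcon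
  push_neg at hcon
  set K := n ^ 3 with hK
  set pairs := X.offDiag.filter (fun e => e.1 < e.2) with hpairs
  set D := ∏ e ∈ pairs, (e.2 - e.1).toNat with hD
  -- every term is positive and at most 6^n
  have hterm : ∀ e ∈ pairs, 0 < (e.2 - e.1).toNat ∧ (e.2 - e.1).toNat ≤ 6 ^ n := by
    intro e he
    rw [hpairs, Finset.mem_filter, Finset.mem_offDiag] at he
    obtain ⟨⟨h1, h2, _⟩, hlt⟩ := he
    have hb1 := hbd e.1 h1
    have hb2 := hbd e.2 h2
    have h6 : ((6:ℤ) ^ n) = ((6 ^ n : ℕ) : ℤ) := by push_cast; ring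
    constructor
    · omega
    · have : (e.2 - e.1) ≤ ((6 ^ n : ℕ) : ℤ) := by omega
      omega
  have hDpos : 0 < D := Finset.prod_pos (fun e he => (hterm e he).1)
  -- card of pairs
  have hcard2 : 2 * pairs.card = n * n - n := by
    have hswap : (X.offDiag.filter (fun e => e.2 < e.1)).card = pairs.card := by
      apply Finset.card_bij (fun e _ => e.swap)
      · intro e he
        rw [Finset.mem_filter, Finset.mem_offDiag] at he ⊢
        exact ⟨⟨he.1.2.1, he.1.1, fun h => he.1.2.2 h.symm⟩, he.2⟩
      · intro a ha b hb h
        exact Prod.swap_injective h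
      · intro b hb
        refine ⟨b.swap, ?_, by simp⟩
        rw [Finset.mem_filter, Finset.mem_offDiag] at hb ⊢
        exact ⟨⟨hb.1.2.1, hb.1.1, fun h => hb.1.2.2 h.symm⟩, hb.2⟩
    have hunion : pairs.card + (X.offDiag.filter (fun e => ¬ e.1 < e.2)).card = X.offDiag.card :=
      Finset.card_filter_add_card_filter_not _
    have heq : X.offDiag.filter (fun e => ¬ e.1 < e.2) = X.offDiag.filter (fun e => e.2 < e.1) := by
      apply Finset.filter_congr
      intro e he
      rw [Finset.mem_offDiag] at he
      constructor
      · intro h; rcases lt_or_gt_of_ne he.2.2 with h' | h' <;> [exact absurd h' h; exact h']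
      · intro h; omega
    have hod : X.offDiag.card = n * n - n := by rw [Finset.offDiag_card, hcard]
    rw [heq, hswap] at hunion
    omega
  have hDle : D ≤ (6 ^ n) ^ pairs.card :=
    Finset.prod_le_pow_card _ _ _ (fun e he => (hterm e he).2)
  -- every prime ≤ 2K divides D
  have hdvdD : ∀ p : ℕ, p.Prime → p ≤ 2 * K → p ∣ D := by
    intro p hp hple
    obtain ⟨x, hx, y, hy, hxy, hd⟩ := hcon p hp hple
    have key : ∀ a b : ℤ, a ∈ X → b ∈ X → a < b → (p:ℤ) ∣ b - a → p ∣ D := by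
      intro a b ha hb hab hdvd
      have hmem : (a, b) ∈ pairs := by
        rw [hpairs, Finset.mem_filter, Finset.mem_offDiag]
        exact ⟨⟨ha, hb, ne_of_lt hab⟩, hab⟩
      have hterm_dvd : p ∣ (b - a).toNat := by
        have : ((b - a).toNat : ℤ) = b - a := Int.toNat_of_nonneg (by omega)
        rw [← Int.natCast_dvd_natCast] at *
        rwa [this]
      exact hterm_dvd.trans (Finset.dvd_prod_of_mem _ hmem)
    rcases lt_or_gt_of_ne hxy with h | h
    · exact key x y hx hy h (by rwa [← Int.dvd_neg, neg_sub] at hd)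
    · exact key y x hy hx h hd
  -- the primorial-type product
  set P := ∏ p ∈ (Finset.range (2 * K + 1)).filter Nat.Prime, p with hP
  have hPD : P ∣ D := by
    apply Finset.prod_primes_dvd
    · intro p hp
      exact (Finset.mem_filter.mp hp).2.prime
    · intro p hp
      rw [Finset.mem_filter, Finset.mem_range] at hp
      exact hdvdD p hp.2 (by omega)
  have hPle : P ≤ D := Nat.le_of_dvd hDpos hPD
  -- numeric contradiction
  have hKpos : 0 < K := by positivity
  set s := Nat.sqrt (2 * K) with hs
  -- bound the central binomial coefficient by (2K)^(s+1) * P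
  have hCB : Nat.centralBinom K ≤ (2 * K) ^ (s + 1) * P := by
    set R := Finset.range (2 * K + 1) with hR
    set f := (Nat.centralBinom K).factorization with hf
    have hfact : Nat.centralBinom K = ∏ p ∈ R, p ^ f p :=
      (Nat.prod_pow_factorization_centralBinom K).symm
    have hchoose : ∀ p, f p = ((2 * K).choose K).factorization p := by
      intro p; rw [hf, Nat.centralBinom_eq_two_mul_choose]
    have hA : (∏ p ∈ R.filter (fun p => p ≤ s), p ^ f p) ≤ (2 * K) ^ (s + 1) := by
      have hcardA : (R.filter (fun p => p ≤ s)).card ≤ s + 1 := by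
        have hsub : R.filter (fun p => p ≤ s) ⊆ Finset.range (s + 1) := by
          intro p hp
          rw [Finset.mem_filter] at hp
          exact Finset.mem_range.mpr (by omega)
        calc (R.filter (fun p => p ≤ s)).card ≤ (Finset.range (s + 1)).card :=
              Finset.card_le_card hsub
        _ = s + 1 := Finset.card_range _
      calc (∏ p ∈ R.filter (fun p => p ≤ s), p ^ f p)
          ≤ (2 * K) ^ (R.filter (fun p => p ≤ s)).card := by
            apply Finset.prod_le_pow_card
            intro p _
            rw [hchoose p]
            exact Nat.pow_factorization_choose_le (by omega)
      _ ≤ (2 * K) ^ (s + 1) := Nat.pow_le_pow_right (by omega) hcardA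
    have hB : (∏ p ∈ R.filter (fun p => ¬ p ≤ s), p ^ f p) ≤ P := by
      calc (∏ p ∈ R.filter (fun p => ¬ p ≤ s), p ^ f p)
          ≤ ∏ p ∈ R.filter (fun p => ¬ p ≤ s), (if p.Prime then p else 1) := by
            apply Finset.prod_le_prod'
            intro p hp
            rw [Finset.mem_filter] at hp
            have hps : s < p := by omega
            have hlarge : 2 * K < p ^ 2 := Nat.sqrt_lt'.mp (by rw [← hs]; exact hps)
            by_cases hpp : p.Prime
            · simp only [if_pos hpp]
              have hf1 : f p ≤ 1 := by
                rw [hchoose p]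
                exact Nat.factorization_choose_le_one hlarge
              calc p ^ f p ≤ p ^ 1 := Nat.pow_le_pow_right (by omega) hf1
              _ = p := pow_one p
            · simp only [if_neg hpp, hf, Nat.factorization_eq_zero_of_not_prime _ hpp,
                pow_zero, le_refl]
      _ ≤ ∏ p ∈ R, (if p.Prime then p else 1) := by
            apply Finset.prod_le_prod_of_subset_of_one_le' (Finset.filter_subset _ _)
            intro p _ _
            split
            · next hpp => exact hpp.one_lt.le
            · exact le_refl 1
      _ = P := by rw [hP, Finset.prod_filter]
    calc Nat.centralBinom K = (∏ p ∈ R.filter (fun p => p ≤ s), p ^ f p) *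
          (∏ p ∈ R.filter (fun p => ¬ p ≤ s), p ^ f p) := by
          rw [hfact, Finset.prod_filter_mul_prod_filter_not]
    _ ≤ (2 * K) ^ (s + 1) * P := Nat.mul_le_mul hA hB
  have h1 : 4 ^ K ≤ 2 * K * Nat.centralBinom K :=
    Nat.four_pow_le_two_mul_self_mul_centralBinom K hKpos
  have h2K1 : 1 ≤ 2 * K := by omega
  have h3 : 4 ^ K ≤ (2 * K) ^ (s + 2) * D := by
    calc 4 ^ K ≤ 2 * K * Nat.centralBinom K := h1
    _ ≤ 2 * K * ((2 * K) ^ (s + 1) * P) := Nat.mul_le_mul_left _ hCB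
    _ = (2 * K) ^ (s + 2) * P := by ring
    _ ≤ (2 * K) ^ (s + 2) * D := Nat.mul_le_mul_left _ hPle
  have hs2 : s + 2 ≤ n ^ 2 := by
    obtain ⟨m, hm⟩ : ∃ m, n ^ 2 = m + 2 :=
      ⟨n ^ 2 - 2, (Nat.sub_add_cancel (by nlinarith : 2 ≤ n ^ 2)).symm⟩
    have hmsq : 2 * K ≤ m ^ 2 := by
      have h4 : n ^ 4 = m ^ 2 + 4 * m + 4 := by
        have : n ^ 4 = (n ^ 2) * (n ^ 2) := by ring
        rw [this, hm]; ring
      have hmn : n ^ 2 ≤ m + 2 := le_of_eq hm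
      rw [hK]
      nlinarith
    have : s ≤ m := by
      rw [hs]
      calc Nat.sqrt (2 * K) ≤ Nat.sqrt (m ^ 2) := Nat.sqrt_le_sqrt hmsq
      _ = m := Nat.sqrt_eq' m
    omega
  have h8 : n ^ 8 ≤ 2 ^ n := by have := aux_pow16 n hn; omega
  have h2K4 : 2 * K ≤ n ^ 4 := by
    rw [hK]
    calc 2 * n ^ 3 ≤ n * n ^ 3 := Nat.mul_le_mul_right _ (by omega)
    _ = n ^ 4 := by ring
  have hJ : (2 * K) ^ (s + 2) * (2 * K) ^ (s + 2) ≤ 2 ^ K := by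
    calc (2 * K) ^ (s + 2) * (2 * K) ^ (s + 2) = (2 * K) ^ ((s + 2) + (s + 2)) := (pow_add _ _ _).symm
    _ ≤ (n ^ 4) ^ ((s + 2) + (s + 2)) := Nat.pow_le_pow_left h2K4 _
    _ = (n ^ 8) ^ (s + 2) := by rw [← pow_mul, ← pow_mul]; congr 1; omega
    _ ≤ (2 ^ n) ^ (s + 2) := Nat.pow_le_pow_left h8 _
    _ = 2 ^ (n * (s + 2)) := by rw [← pow_mul]
    _ ≤ 2 ^ (n * n ^ 2) := Nat.pow_le_pow_right (by norm_num) (Nat.mul_le_mul_left _ hs2)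
    _ = 2 ^ K := by rw [hK]; congr 1; ring
  have hD2 : D * D ≤ 6 ^ K := by
    calc D * D ≤ (6 ^ n) ^ pairs.card * (6 ^ n) ^ pairs.card := Nat.mul_le_mul hDle hDle
    _ = (6 ^ n) ^ (2 * pairs.card) := by rw [← pow_add]; congr 1; omega
    _ = (6 ^ n) ^ (n * n - n) := by rw [hcard2]
    _ = 6 ^ (n * (n * n - n)) := by rw [← pow_mul]
    _ ≤ 6 ^ K := by
        apply Nat.pow_le_pow_right (by norm_num)
        calc n * (n * n - n) ≤ n * (n * n) := Nat.mul_le_mul_left _ (Nat.sub_le _ _)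
        _ = K := by rw [hK]; ring
  have hbig : 4 ^ K * 4 ^ K ≤ 2 ^ K * 6 ^ K := by
    calc 4 ^ K * 4 ^ K ≤ ((2 * K) ^ (s + 2) * D) * ((2 * K) ^ (s + 2) * D) :=
          Nat.mul_le_mul h3 h3
    _ = ((2 * K) ^ (s + 2) * (2 * K) ^ (s + 2)) * (D * D) := by ring
    _ ≤ 2 ^ K * 6 ^ K := Nat.mul_le_mul hJ hD2
  have h16 : (16 : ℕ) ^ K ≤ 12 ^ K := by
    have e1 : (16 : ℕ) ^ K = 4 ^ K * 4 ^ K := by rw [← mul_pow]; norm_num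
    have e2 : (12 : ℕ) ^ K = 2 ^ K * 6 ^ K := by rw [← mul_pow]; norm_num
    rw [e1, e2]; exact hbig
  have hlt : (12 : ℕ) ^ K < 16 ^ K := Nat.pow_lt_pow_left (by norm_num) (by omega)
  omega

/-- `c` is a compression on the finite set `S` of integers: it preserves
all relations `x - 2y + z = 0` among elements of `S`. -/
def IsCompressionOn (S : Finset ℤ) (c : ℤ → ℤ) : Prop :=
  ∀ x ∈ S, ∀ y ∈ S, ∀ z ∈ S, x - 2 * y + z = 0 → c x - 2 * c y + c z = 0

theorem compress_into_cubic_segment :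
    ∃ N : ℕ, ∀ n : ℕ, N ≤ n → ∀ X : Finset ℤ, X.card = n →
      (∀ x ∈ X, 1 ≤ x ∧ (x : ℝ) ≤ 4 * (n : ℝ) ^ 4 * (6 : ℝ) ^ ((n : ℝ) / 2)) →
      ∃ X' ⊆ X, n ≤ 2 * X'.card ∧
        ∃ c : ℤ → ℤ, Set.InjOn c (X' : Set ℤ) ∧ IsCompressionOn X' c ∧
          ∀ x ∈ X', c x ∈ Finset.Icc (1 : ℤ) ((n : ℤ) ^ 3) := by
  refine ⟨64, fun n hn X hcard hX => ?_⟩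
  -- integer upper bound on elements of X
  have hb6 : ∀ x ∈ X, 1 ≤ x ∧ x ≤ (6 : ℤ) ^ n := by
    intro x hx
    obtain ⟨h1, h2⟩ := hX x hx
    refine ⟨h1, ?_⟩
    have key : 4 * (n : ℝ) ^ 4 * (6 : ℝ) ^ ((n : ℝ) / 2) ≤ (6 : ℝ) ^ (n : ℕ) := by
      have hBpos : (0 : ℝ) ≤ (6 : ℝ) ^ ((n : ℝ) / 2) := Real.rpow_nonneg (by norm_num) _
      have hBB : (6 : ℝ) ^ ((n : ℝ) / 2) * (6 : ℝ) ^ ((n : ℝ) / 2) = (6 : ℝ) ^ (n : ℕ) := by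
        rw [← Real.rpow_add (by norm_num : (0 : ℝ) < 6)]
        have : (n : ℝ) / 2 + (n : ℝ) / 2 = ((n : ℕ) : ℝ) := by ring
        rw [this, Real.rpow_natCast]
      have hsq : (4 * (n : ℝ) ^ 4 * (6 : ℝ) ^ ((n : ℝ) / 2)) ^ 2
          = 16 * (n : ℝ) ^ 8 * (6 : ℝ) ^ (n : ℕ) := by
        calc (4 * (n : ℝ) ^ 4 * (6 : ℝ) ^ ((n : ℝ) / 2)) ^ 2
            = 16 * (n : ℝ) ^ 8 * ((6 : ℝ) ^ ((n : ℝ) / 2) * (6 : ℝ) ^ ((n : ℝ) / 2)) := by ring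
        _ = 16 * (n : ℝ) ^ 8 * (6 : ℝ) ^ (n : ℕ) := by rw [hBB]
      have h16 : 16 * (n : ℝ) ^ 8 ≤ (6 : ℝ) ^ (n : ℕ) := by
        have hnat : 16 * n ^ 8 ≤ 6 ^ n :=
          le_trans (aux_pow16 n hn) (Nat.pow_le_pow_left (by norm_num) n)
        exact_mod_cast hnat
      have h6pos : (0 : ℝ) ≤ (6 : ℝ) ^ (n : ℕ) := by positivity
      have h2' : (4 * (n : ℝ) ^ 4 * (6 : ℝ) ^ ((n : ℝ) / 2)) ^ 2 ≤ ((6 : ℝ) ^ (n : ℕ)) ^ 2 := by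
        rw [hsq]
        nlinarith [h16, h6pos]
      have h3' := Real.sqrt_le_sqrt h2'
      rwa [Real.sqrt_sq (by positivity), Real.sqrt_sq h6pos] at h3'
    have hfin : (x : ℝ) ≤ (6 : ℝ) ^ (n : ℕ) := le_trans h2 key
    exact_mod_cast hfin
  obtain ⟨p, hp, hple, hnd⟩ := exists_good_prime n hn X hcard hb6
  set M : ℤ := (n : ℤ) ^ 3 with hM
  set T : ℤ := (p : ℤ) with hT
  have hTpos : 0 < T := by rw [hT]; exact_mod_cast hp.pos
  have hT2 : T ≤ 2 * M := by
    rw [hT, hM]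
    have : ((p : ℤ)) ≤ ((2 * n ^ 3 : ℕ) : ℤ) := by exact_mod_cast hple
    push_cast at this
    linarith
  have hres : ∀ x : ℤ, 0 ≤ x % T ∧ x % T < T := fun x =>
    ⟨Int.emod_nonneg x (ne_of_gt hTpos), Int.emod_lt_of_pos x hTpos⟩
  have hinj : ∀ x ∈ X, ∀ y ∈ X, x % T = y % T → x = y := by
    intro x hx y hy hxy
    by_contra hne
    exact hnd x hx y hy hne
      (Int.dvd_of_emod_eq_zero (Int.emod_eq_emod_iff_emod_sub_eq_zero.mp hxy))
  have hmod : ∀ x y z : ℤ, x - 2 * y + z = 0 → T ∣ (x % T - 2 * (y % T) + z % T) := by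
    intro x y z hxyz
    have h1 : ∀ a : ℤ, a % T ≡ a [ZMOD T] := fun a => Int.emod_emod_of_dvd a dvd_rfl
    have h2 : (x % T - 2 * (y % T) + z % T) ≡ (x - 2 * y + z) [ZMOD T] :=
      ((h1 x).sub ((h1 y).mul_left 2)).add (h1 z)
    rw [hxyz] at h2
    exact (Int.modEq_zero_iff_dvd).mp h2
  set X₁ := X.filter (fun x => 2 * (x % T) < T) with hX1
  set X₂ := X.filter (fun x => ¬ 2 * (x % T) < T) with hX2
  have hsplit : X₁.card + X₂.card = n := by
    rw [hX1, hX2, Finset.card_filter_add_card_filter_not, hcard]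
  by_cases hc : n ≤ 2 * X₁.card
  · refine ⟨X₁, Finset.filter_subset _ _, hc, fun x => x % T + 1, ?_, ?_, ?_⟩
    · intro a ha b hb hab
      have ha' := Finset.mem_coe.mp ha
      have hb' := Finset.mem_coe.mp hb
      rw [hX1, Finset.mem_filter] at ha' hb'
      have hab' : a % T + 1 = b % T + 1 := hab
      exact hinj a ha'.1 b hb'.1 (by omega)
    · intro x hx y hy z hz hxyz
      rw [hX1, Finset.mem_filter] at hx hy hz
      have hd := hmod x y z hxyz
      have h1 := hres x; have h2 := hres y; have h3 := hres z
      have hu : x % T - 2 * (y % T) + z % T = 0 := by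
        refine int_eq_zero_of_dvd T _ hd ?_ ?_
        · have b1 := hx.2; have b2 := hy.2; have b3 := hz.2; omega
        · have b1 := hx.2; have b2 := hy.2; have b3 := hz.2; omega
      show x % T + 1 - 2 * (y % T + 1) + (z % T + 1) = 0
      omega
    · intro x hx
      rw [hX1, Finset.mem_filter] at hx
      rw [Finset.mem_Icc]
      have h1 := hres x
      have b1 := hx.2
      show 1 ≤ x % T + 1 ∧ x % T + 1 ≤ M
      omega
  · have hc2 : n ≤ 2 * X₂.card := by omega
    refine ⟨X₂, Finset.filter_subset _ _, hc2, fun x => x % T + 1 + (M - T), ?_, ?_, ?_⟩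
    · intro a ha b hb hab
      have ha' := Finset.mem_coe.mp ha
      have hb' := Finset.mem_coe.mp hb
      rw [hX2, Finset.mem_filter] at ha' hb'
      have hab' : a % T + 1 + (M - T) = b % T + 1 + (M - T) := hab
      exact hinj a ha'.1 b hb'.1 (by omega)
    · intro x hx y hy z hz hxyz
      rw [hX2, Finset.mem_filter] at hx hy hz
      have hd := hmod x y z hxyz
      have h1 := hres x; have h2 := hres y; have h3 := hres z
      have hu : x % T - 2 * (y % T) + z % T = 0 := by
        refine int_eq_zero_of_dvd T _ hd ?_ ?_
        · have b1 := hx.2; have b2 := hy.2; have b3 := hz.2; omega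
        · have b1 := hx.2; have b2 := hy.2; have b3 := hz.2; omega
      show x % T + 1 + (M - T) - 2 * (y % T + 1 + (M - T)) + (z % T + 1 + (M - T)) = 0
      omega
    · intro x hx
      rw [hX2, Finset.mem_filter] at hx
      rw [Finset.mem_Icc]
      have h1 := hres x
      have b1 := hx.2
      show 1 ≤ x % T + 1 + (M - T) ∧ x % T + 1 + (M - T) ≤ M
      omega
end

section
/- Let X be a set of n distinct integers in [1, 8n³] and n sufficiently large. For every ε > 0 there exists a constant C_ε and a subset X' ⊆ X with |X'| ≥ (1/2 - ε)n such that X' admits an injective compression into {1, ..., ⌈C_ε · n · ln n⌉}. -/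
lemma cheb (M : ℕ) (hM : 4 ≤ M) :
    2*M ≤ (Nat.log 2 (2*M) + 1) * (((Finset.range (2*M+1)).filter Nat.Prime).card + 1) := by
  set π := ((Finset.range (2*M+1)).filter Nat.Prime).card with hπ
  have hM0 : 0 < M := by omega
  have hcb0 : Nat.centralBinom M ≠ 0 := (Nat.centralBinom_pos M).ne'
  have hsub : (Nat.centralBinom M).primeFactors ⊆ (Finset.range (2*M+1)).filter Nat.Prime := by
    intro p hp
    have hprime := Nat.prime_of_mem_primeFactors hp
    have hν : (Nat.centralBinom M).factorization p ≠ 0 := by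
      rw [← Finsupp.mem_support_iff, Nat.support_factorization]; exact hp
    have hle : p ^ (Nat.centralBinom M).factorization p ≤ 2*M := by
      rw [Nat.centralBinom]
      exact Nat.pow_factorization_choose_le (by omega)
    have : p ≤ 2*M := le_trans (le_trans (Nat.le_self_pow hν p) hle) le_rfl
    simp [Finset.mem_filter, Finset.mem_range]
    exact ⟨by omega, hprime⟩
  have hcble : Nat.centralBinom M ≤ (2*M)^π := by
    calc Nat.centralBinom M
        = (Nat.centralBinom M).factorization.prod (· ^ ·) :=
          (Nat.factorization_prod_pow_eq_self hcb0).symm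
      _ = ∏ p ∈ (Nat.centralBinom M).primeFactors, p ^ (Nat.centralBinom M).factorization p := by
          rw [Finsupp.prod, Nat.support_factorization]
      _ ≤ ∏ _p ∈ (Nat.centralBinom M).primeFactors, (2*M) := by
          apply Finset.prod_le_prod' -- each factor ≤ 2M
          intro p hp
          rw [Nat.centralBinom]
          exact Nat.pow_factorization_choose_le (by omega)
      _ = (2*M) ^ (Nat.centralBinom M).primeFactors.card := by rw [Finset.prod_const]
      _ ≤ (2*M) ^ π := Nat.pow_le_pow_right (by omega) (Finset.card_le_card hsub)
  have h4 : 4 ^ M < M * Nat.centralBinom M := Nat.four_pow_lt_mul_centralBinom M hM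
  have key : 2 ^ (2*M) < 2 ^ ((Nat.log 2 (2*M) + 1) * (π+1)) := by
    calc 2 ^ (2*M) = 4 ^ M := by rw [pow_mul]; norm_num
      _ < M * Nat.centralBinom M := h4
      _ ≤ (2*M) * (2*M)^π := Nat.mul_le_mul (by omega) hcble
      _ = (2*M)^(π+1) := by ring
      _ ≤ (2 ^ (Nat.log 2 (2*M) + 1))^(π+1) :=
          Nat.pow_le_pow_left (le_of_lt (Nat.lt_pow_succ_log_self (by norm_num) _)) _
      _ = 2 ^ ((Nat.log 2 (2*M) + 1) * (π+1)) := by rw [← pow_mul]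
  have := (Nat.pow_lt_pow_iff_right (by norm_num : 1 < 2)).mp key
  omega

lemma few_divisors (n : ℕ) (hn : 8 ≤ n) (d : ℤ) (hd : d ≠ 0) (hda : d.natAbs ≤ 8*n^3)
    (S : Finset ℕ) (hS : ∀ p ∈ S, p.Prime ∧ n < p ∧ (p:ℤ) ∣ d) : S.card ≤ 3 := by
  by_contra hc
  push_neg at hc
  have hprod : ∏ p ∈ S, p ∣ d.natAbs := by
    apply Finset.prod_primes_dvd
    · intro p hp; exact (hS p hp).1.prime
    · intro p hp
      have := (hS p hp).2.2
      rwa [Int.natCast_dvd] at this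
  have hlow : (n+1) ^ S.card ≤ ∏ p ∈ S, p := by
    apply Finset.pow_card_le_prod
    intro p hp; exact (hS p hp).2.1
  have h1 : (n+1)^4 ≤ (n+1)^S.card := Nat.pow_le_pow_right (by omega) (by omega)
  have h2 : ∏ p ∈ S, p ≤ d.natAbs := Nat.le_of_dvd (Int.natAbs_pos.mpr hd) hprod
  have : (n+1)^4 ≤ 8*n^3 := by omega
  have h8 : n^4 < (n+1)^4 := Nat.pow_lt_pow_left (by omega) (by norm_num)
  have h9 : 8*n^3 ≤ n*n^3 := Nat.mul_le_mul_right _ hn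
  have h10 : n*n^3 = n^4 := by ring
  omega

lemma count_window (p m : ℕ) [Fact p.Prime] (hm : m < p) (x : ZMod p) (hx : x ≠ 0) :
    (Finset.univ.filter (fun q : ZMod p => (q * x).val ∈ Finset.Icc 1 m)).card = m := by
  have hbij : (Finset.univ.filter (fun q : ZMod p => (q * x).val ∈ Finset.Icc 1 m)).card
      = (Finset.univ.filter (fun w : ZMod p => w.val ∈ Finset.Icc 1 m)).card := by
    apply Finset.card_bij (fun q _ => q * x)
    · intro q hq
      simp only [Finset.mem_filter, Finset.mem_univ, true_and] at hq ⊢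
      exact hq
    · intro a ha b hb hab
      exact mul_left_injective₀ hx hab
    · intro w hw
      refine ⟨w * x⁻¹, ?_, ?_⟩
      · simp only [Finset.mem_filter, Finset.mem_univ, true_and] at hw ⊢
        rw [mul_assoc, inv_mul_cancel₀ hx, mul_one]
        exact hw
      · rw [mul_assoc, inv_mul_cancel₀ hx, mul_one]
  have h2 : (Finset.univ.filter (fun w : ZMod p => w.val ∈ Finset.Icc 1 m)).card
      = (Finset.Icc 1 m).card := by
    apply Finset.card_bij (fun (v : ZMod p) _ => v.val)
    · intro v hv
      simp only [Finset.mem_filter, Finset.mem_univ, true_and] at hv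
      exact hv
    · intro a ha b hb hab
      exact ZMod.val_injective p hab
    · intro j hj
      simp only [Finset.mem_Icc] at hj
      refine ⟨(j : ZMod p), ?_, ?_⟩
      · simp only [Finset.mem_filter, Finset.mem_univ, true_and, Finset.mem_Icc]
        rw [ZMod.val_cast_of_lt (by omega)]
        omega
      · rw [ZMod.val_cast_of_lt (by omega)]
  rw [hbij, h2, Nat.card_Icc]; omega


set_option maxHeartbeats 2000000 in
theorem compress_into_almost_linear_segment :
    ∀ ε : ℝ, 0 < ε → ∃ C : ℝ, ∃ N : ℕ, ∀ n : ℕ, N ≤ n →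
      ∀ X : Finset ℤ, X.card = n → X ⊆ Finset.Icc (1 : ℤ) (8 * (n : ℤ) ^ 3) →
      ∃ X' ⊆ X, (1 / 2 - ε) * (n : ℝ) ≤ (X'.card : ℝ) ∧
        ∃ c : ℤ → ℤ, Set.InjOn c (X' : Set ℤ) ∧ IsCompressionOn X' c ∧
          ∀ x ∈ X', c x ∈ Finset.Icc (1 : ℤ) ⌈C * (n : ℝ) * Real.log n⌉ := by
  intro ε hε
  classical
  set D : ℕ := ⌈8/ε⌉₊ + 1 with hDdef
  have hDε : (8:ℝ)/ε ≤ D := by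
    have := Nat.le_ceil (8/ε)
    have h2 : ((⌈8/ε⌉₊ : ℕ) : ℝ) ≤ D := by exact_mod_cast Nat.le_succ _
    linarith
  have hD1 : 1 ≤ D := by omega
  set C₁ : ℕ := 4*(D+2) with hC₁def
  refine ⟨(6*C₁ : ℕ), 8*(D+2) + ⌈1/ε⌉₊ + 100, ?_⟩
  intro n hn X hXcard hXsub
  have hn100 : 100 ≤ n := by omega
  have hn8D : 8*(D+2) ≤ n := by omega
  have hεn : 1 ≤ ε * n := by
    have h1 : (⌈1/ε⌉₊ : ℝ) ≤ n := by
      exact_mod_cast le_trans (by omega : ⌈1/ε⌉₊ ≤ 8*(D+2) + ⌈1/ε⌉₊ + 100) hn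
    have h2 : 1/ε ≤ n := le_trans (Nat.le_ceil _) h1
    rw [div_le_iff₀ hε] at h2
    linarith
  set k : ℕ := Nat.log 2 n with hkdef
  set M : ℕ := C₁ * n * (k+1) with hMdef
  have hkn : k + 1 ≤ n := by
    have := Nat.log_lt_self 2 (by omega : n ≠ 0)
    omega
  have hk2 : n < 2^(k+1) := Nat.lt_pow_succ_log_self (by norm_num) n
  -- #### prime counting
  set P : Finset ℕ := (Finset.Icc (n+1) (2*M)).filter Nat.Prime with hPdef
  have hPcard : D*n + 1 ≤ P.card := by
    set π := ((Finset.range (2*M+1)).filter Nat.Prime).card with hπ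
    have hM4 : 4 ≤ M := by
      rw [hMdef, hC₁def]
      have h : 4*1*1*1 ≤ 4*(D+2)*n*(k+1) :=
        Nat.mul_le_mul (Nat.mul_le_mul (Nat.mul_le_mul le_rfl (by omega)) (by omega)) (by omega)
      simpa using h
    have hcheb := cheb M hM4
    have hlog : Nat.log 2 (2*M) + 1 ≤ 4*(k+1) := by
      have h2M : 2*M < 2^(4*(k+1)) := by
        have h1 : 2*M ≤ n^3 := by
          rw [hMdef, hC₁def]
          calc 2*(4*(D+2)*n*(k+1)) = 8*(D+2)*(k+1)*n := by ring
            _ ≤ n * n * n := by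
                apply Nat.mul_le_mul_right
                exact Nat.mul_le_mul hn8D hkn
            _ = n^3 := by ring
        have h2 : n^3 < 2^(4*(k+1)) := by
          calc n^3 ≤ n^4 := Nat.pow_le_pow_right (by omega) (by norm_num)
            _ < (2^(k+1))^4 := Nat.pow_lt_pow_left hk2 (by norm_num)
            _ = 2^(4*(k+1)) := by rw [← pow_mul]; ring_nf
        omega
      have := Nat.log_lt_of_lt_pow (by positivity) h2M
      omega
    have hπbig : 2*(D+2)*n ≤ π + 1 := by
      have h1 : 2*M ≤ 4*(k+1) * (π+1) := le_trans hcheb (Nat.mul_le_mul_right _ hlog)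
      have h2 : 2*M = (4*(k+1)) * ((2*(D+2))*n) := by rw [hMdef, hC₁def]; ring
      rw [h2] at h1
      have := Nat.le_of_mul_le_mul_left h1 (by positivity)
      omega
    have hsplit : ((Finset.range (2*M+1)).filter Nat.Prime) ⊆
        P ∪ (Finset.range (n+1)).filter Nat.Prime := by
      intro x hx
      have hx' := Finset.mem_filter.mp hx
      have hxr := Finset.mem_range.mp hx'.1
      rcases le_or_gt x n with h | h
      · exact Finset.mem_union_right _
          (Finset.mem_filter.mpr ⟨Finset.mem_range.mpr (by omega), hx'.2⟩)
      · exact Finset.mem_union_left _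
          (Finset.mem_filter.mpr ⟨Finset.mem_Icc.mpr ⟨by omega, by omega⟩, hx'.2⟩)
    have hπle : π ≤ P.card + (n+1) := by
      calc π ≤ (P ∪ (Finset.range (n+1)).filter Nat.Prime).card := Finset.card_le_card hsplit
        _ ≤ P.card + ((Finset.range (n+1)).filter Nat.Prime).card := Finset.card_union_le _ _
        _ ≤ P.card + (n+1) := by
            have : ((Finset.range (n+1)).filter Nat.Prime).card ≤ (Finset.range (n+1)).card :=
              Finset.card_le_card (Finset.filter_subset _ _)
            simp at this; omega
    nlinarith [hπbig, hπle]
  have hPprops : ∀ p ∈ P, p.Prime ∧ n < p := by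
    intro p hp
    have h1 := Finset.mem_filter.mp hp
    have h2 := Finset.mem_Icc.mp h1.1
    exact ⟨h1.2, by omega⟩
  -- #### bad sets
  set Bad : ℕ → Finset ℤ := fun p => X.filter
    (fun x => (p:ℤ) ∣ x ∨ ∃ y ∈ X, y ≠ x ∧ (p:ℤ) ∣ (x - y)) with hBaddef
  have hbound : ∀ x ∈ X, 1 ≤ x ∧ x ≤ 8*(n:ℤ)^3 := by
    intro x hx; exact Finset.mem_Icc.mp (hXsub hx)
  have hsumBad : ∑ p ∈ P, (Bad p).card ≤ 3*n + 3*n^2 := by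
    set Q : Finset (ℤ × ℤ) := (X ×ˢ X).filter (fun z => z.1 ≠ z.2) with hQ
    have hstep1 : ∀ p ∈ P, (Bad p).card
        ≤ (X.filter (fun x => (p:ℤ) ∣ x)).card
          + (Q.filter (fun z => (p:ℤ) ∣ z.1 - z.2)).card := by
      intro p hp
      have hsub : Bad p ⊆ (X.filter (fun x => (p:ℤ) ∣ x)) ∪
            (Q.filter (fun z => (p:ℤ) ∣ z.1 - z.2)).image Prod.fst := by
        intro x hx
        obtain ⟨hxX, hcase⟩ := Finset.mem_filter.mp hx
        rcases hcase with h | ⟨y, hyX, hyne, hdvd⟩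
        · exact Finset.mem_union_left _ (Finset.mem_filter.mpr ⟨hxX, h⟩)
        · refine Finset.mem_union_right _ (Finset.mem_image.mpr ⟨(x, y), ?_, rfl⟩)
          refine Finset.mem_filter.mpr
            ⟨Finset.mem_filter.mpr ⟨Finset.mem_product.mpr ⟨hxX, hyX⟩, ?_⟩, hdvd⟩
          exact Ne.symm hyne
      calc _ ≤ _ := Finset.card_le_card hsub
        _ ≤ _ := Finset.card_union_le _ _
        _ ≤ _ := by
            gcongr
            exact Finset.card_image_le
    have hstep2 : ∑ p ∈ P, (X.filter (fun x => (p:ℤ) ∣ x)).card ≤ 3*n := by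
      have hswap : ∑ p ∈ P, (X.filter (fun x => (p:ℤ) ∣ x)).card
          = ∑ x ∈ X, (P.filter (fun p : ℕ => (p:ℤ) ∣ x)).card := by
        calc ∑ p ∈ P, (X.filter (fun x => (p:ℤ) ∣ x)).card
            = ∑ p ∈ P, ∑ x ∈ X, if (p:ℤ) ∣ x then 1 else 0 :=
              Finset.sum_congr rfl (fun p _ => Finset.card_filter _ _)
          _ = ∑ x ∈ X, ∑ p ∈ P, if (p:ℤ) ∣ x then 1 else 0 := Finset.sum_comm
          _ = ∑ x ∈ X, (P.filter (fun p : ℕ => (p:ℤ) ∣ x)).card :=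
              Finset.sum_congr rfl (fun x _ => (Finset.card_filter _ _).symm)
      rw [hswap]
      calc ∑ x ∈ X, (P.filter (fun p : ℕ => (p:ℤ) ∣ x)).card ≤ ∑ _x ∈ X, 3 := by
            apply Finset.sum_le_sum
            intro x hx
            apply few_divisors n (by omega) x
            · have := hbound x hx; omega
            · have h := hbound x hx
              have hc : (8*(n:ℤ)^3) = ((8*n^3 : ℕ) : ℤ) := by push_cast; ring
              rw [hc] at h
              omega
            · intro p hp
              obtain ⟨hp1, hp2⟩ := Finset.mem_filter.mp hp
              exact ⟨(hPprops p hp1).1, (hPprops p hp1).2, hp2⟩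
        _ = 3*n := by rw [Finset.sum_const, hXcard]; ring
    have hstep3 : ∑ p ∈ P, (Q.filter (fun z => (p:ℤ) ∣ z.1 - z.2)).card ≤ 3*n^2 := by
      have hswap : ∑ p ∈ P, (Q.filter (fun z => (p:ℤ) ∣ z.1 - z.2)).card
          = ∑ z ∈ Q, (P.filter (fun p : ℕ => (p:ℤ) ∣ z.1 - z.2)).card := by
        calc ∑ p ∈ P, (Q.filter (fun z => (p:ℤ) ∣ z.1 - z.2)).card
            = ∑ p ∈ P, ∑ z ∈ Q, if (p:ℤ) ∣ z.1 - z.2 then 1 else 0 :=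
              Finset.sum_congr rfl (fun p _ => Finset.card_filter _ _)
          _ = ∑ z ∈ Q, ∑ p ∈ P, if (p:ℤ) ∣ z.1 - z.2 then 1 else 0 := Finset.sum_comm
          _ = ∑ z ∈ Q, (P.filter (fun p : ℕ => (p:ℤ) ∣ z.1 - z.2)).card :=
              Finset.sum_congr rfl (fun z _ => (Finset.card_filter _ _).symm)
      rw [hswap]
      have hQcard : Q.card ≤ n^2 := by
        calc Q.card ≤ (X ×ˢ X).card := Finset.card_le_card (Finset.filter_subset _ _)
          _ = n * n := by rw [Finset.card_product, hXcard]
          _ = n^2 := by ring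
      calc ∑ z ∈ Q, (P.filter (fun p : ℕ => (p:ℤ) ∣ z.1 - z.2)).card ≤ ∑ _z ∈ Q, 3 := by
            apply Finset.sum_le_sum
            intro z hz
            obtain ⟨hzX, hzne⟩ := Finset.mem_filter.mp hz
            obtain ⟨hz1, hz2⟩ := Finset.mem_product.mp hzX
            apply few_divisors n (by omega) (z.1 - z.2) (sub_ne_zero.mpr hzne)
            · have h1 := hbound z.1 hz1
              have h2 := hbound z.2 hz2
              have hc : (8*(n:ℤ)^3) = ((8*n^3 : ℕ) : ℤ) := by push_cast; ring
              rw [hc] at h1 h2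
              omega
            · intro p hp
              obtain ⟨hp1, hp2⟩ := Finset.mem_filter.mp hp
              exact ⟨(hPprops p hp1).1, (hPprops p hp1).2, hp2⟩
        _ = 3 * Q.card := by rw [Finset.sum_const]; ring
        _ ≤ 3*n^2 := by omega
    calc ∑ p ∈ P, (Bad p).card
        ≤ ∑ p ∈ P, ((X.filter (fun x => (p:ℤ) ∣ x)).card
            + (Q.filter (fun z => (p:ℤ) ∣ z.1 - z.2)).card) := Finset.sum_le_sum hstep1
      _ = _ + _ := Finset.sum_add_distrib
      _ ≤ 3*n + 3*n^2 := by omega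
  -- #### choose a good prime
  have hPne : P.Nonempty := Finset.card_pos.mp (by omega)
  obtain ⟨p, hpP, hpmin⟩ : ∃ p ∈ P, P.card * (Bad p).card ≤ ∑ q ∈ P, (Bad q).card := by
    obtain ⟨p, hp1, hp2⟩ := Finset.exists_le_of_sum_le
      (f := fun p => P.card * (Bad p).card)
      (g := fun _ => ∑ q ∈ P, (Bad q).card) hPne
      (by rw [← Finset.mul_sum, Finset.sum_const, smul_eq_mul])
    exact ⟨p, hp1, hp2⟩
  have hpprime : p.Prime := (Finset.mem_filter.mp hpP).2
  have hpIcc := Finset.mem_Icc.mp (Finset.mem_filter.mp hpP).1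
  have hpn : n < p := by omega
  haveI : Fact p.Prime := ⟨hpprime⟩
  have hpodd : p % 2 = 1 := Nat.odd_iff.mp (hpprime.odd_of_ne_two (by omega))
  set m : ℕ := (p-1)/2 with hmdef
  have h2m : 2*m = p - 1 := by omega
  have hmp : m < p := by omega
  -- #### bad bound for the chosen p
  have hbadreal : ((Bad p).card : ℝ) ≤ ε * n / 2 := by
    have h1 : D * n * (Bad p).card ≤ 3*n + 3*n^2 :=
      le_trans (Nat.mul_le_mul_right _ (by omega)) (le_trans hpmin hsumBad)
    have hnR : (3:ℝ) ≤ n := by exact_mod_cast le_trans (by norm_num) hn100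
    have h1R : (D:ℝ) * n * (Bad p).card ≤ 3*n + 3*n^2 := by exact_mod_cast h1
    have h4 : (D:ℝ) * n * (Bad p).card ≤ 4*n^2 := by nlinarith
    have hb0 : (0:ℝ) ≤ (Bad p).card := Nat.cast_nonneg _
    have hn0 : (0:ℝ) < n := by linarith
    have h8 : (8/ε) * n * (Bad p).card ≤ 4*n^2 := by
      refine le_trans ?_ h4
      apply mul_le_mul_of_nonneg_right (mul_le_mul_of_nonneg_right hDε hn0.le) hb0
    have hkey : 8 * (n:ℝ) * (Bad p).card ≤ 4*ε*n^2 := by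
      have := mul_le_mul_of_nonneg_left h8 hε.le
      have hc : ε * ((8/ε) * n * (Bad p).card) = 8 * n * (Bad p).card := by field_simp
      nlinarith
    nlinarith [mul_pos hn0 hε]
  set good : Finset ℤ := X \ Bad p with hgooddef
  have hgoodX : good ⊆ X := Finset.sdiff_subset
  have hgoodcard : good.card = n - (Bad p).card := by
    rw [hgooddef, Finset.card_sdiff_of_subset (Finset.filter_subset _ _), hXcard]
  have hBadle : (Bad p).card ≤ n := hXcard ▸ Finset.card_le_card (Finset.filter_subset _ _)
  have hgoodprops : ∀ x ∈ good, ¬ (p:ℤ) ∣ x ∧ ∀ y ∈ X, y ≠ x → ¬ (p:ℤ) ∣ (x - y) := by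
    intro x hx
    have hx1 := Finset.mem_sdiff.mp hx
    have := hx1.2
    rw [hBaddef, Finset.mem_filter] at this
    push_neg at this
    exact this hx1.1
  have hgood0 : ∀ x ∈ good, ((x:ℤ) : ZMod p) ≠ 0 := by
    intro x hx h0
    exact (hgoodprops x hx).1 ((ZMod.intCast_zmod_eq_zero_iff_dvd x p).mp h0)
  -- #### averaging over multipliers
  obtain ⟨q, hq⟩ : ∃ q : ZMod p, good.card * m ≤
      p * (good.filter (fun x : ℤ => ((q * (x:ZMod p)).val ∈ Finset.Icc 1 m))).card := by
    have hsum : ∑ q : ZMod p,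
        (good.filter (fun x : ℤ => ((q * (x:ZMod p)).val ∈ Finset.Icc 1 m))).card
        = good.card * m := by
      calc ∑ q : ZMod p,
            (good.filter (fun x : ℤ => ((q * (x:ZMod p)).val ∈ Finset.Icc 1 m))).card
          = ∑ q : ZMod p, ∑ x ∈ good,
              if ((q * (x:ZMod p)).val ∈ Finset.Icc 1 m) then 1 else 0 :=
            Finset.sum_congr rfl (fun q _ => Finset.card_filter _ _)
        _ = ∑ x ∈ good, ∑ q : ZMod p,
              if ((q * (x:ZMod p)).val ∈ Finset.Icc 1 m) then 1 else 0 :=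
            Finset.sum_comm
        _ = ∑ x ∈ good, (Finset.univ.filter
              (fun q : ZMod p => ((q * (x:ZMod p)).val ∈ Finset.Icc 1 m))).card :=
            Finset.sum_congr rfl (fun x _ => (Finset.card_filter _ _).symm)
        _ = ∑ _x ∈ good, m :=
            Finset.sum_congr rfl (fun x hx => count_window p m hmp _ (hgood0 x hx))
        _ = good.card * m := by rw [Finset.sum_const, smul_eq_mul]
    have hcardZ : Fintype.card (ZMod p) = p := ZMod.card p
    have hne : (Finset.univ : Finset (ZMod p)).Nonempty := Finset.univ_nonempty
    obtain ⟨q, _, hq⟩ := Finset.exists_le_of_sum_le (f := fun _ : ZMod p => good.card * m)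
      (g := fun q : ZMod p => p * (good.filter
        (fun x : ℤ => ((q * (x:ZMod p)).val ∈ Finset.Icc 1 m))).card) hne
      (by rw [Finset.sum_const, ← Finset.mul_sum, hsum, smul_eq_mul, Finset.card_univ, hcardZ])
    exact ⟨q, hq⟩
  set X' : Finset ℤ := good.filter (fun x : ℤ => ((q * (x:ZMod p)).val ∈ Finset.Icc 1 m))
    with hX'def
  refine ⟨X', le_trans (Finset.filter_subset _ _) hgoodX, ?_, ?_⟩
  · -- cardinality bound
    have hgR : (n:ℝ) - ε*n/2 ≤ good.card := by
      have : (good.card:ℝ) = (n:ℝ) - (Bad p).card := by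
        rw [hgoodcard, Nat.cast_sub hBadle]
      rw [this]
      linarith
    have hgn : (good.card:ℝ) ≤ n := by exact_mod_cast hgoodcard ▸ Nat.sub_le n (Bad p).card
    have hqR : (good.card:ℝ) * m ≤ p * X'.card := by exact_mod_cast hq
    have hp1 : 1 ≤ p := by omega
    have hmR : 2*(m:ℝ) = p - 1 := by
      have h : ((2*m : ℕ):ℝ) = ((p - 1 : ℕ):ℝ) := by rw [h2m]
      rw [Nat.cast_sub hp1] at h
      push_cast at h
      linarith
    have hpR : (n:ℝ) < p := by exact_mod_cast hpn
    have hn0 : (0:ℝ) < n := by positivity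
    have hp0 : (0:ℝ) < p := by linarith
    have hX0 : (0:ℝ) ≤ X'.card := Nat.cast_nonneg _
    have h2 : ε * n ≤ ε * p := by nlinarith
    have h3 : (n:ℝ) ≤ ε * p * n := by nlinarith
    have h1 : ((n:ℝ) - ε*n/2) * p ≤ (good.card:ℝ) * p := mul_le_mul_of_nonneg_right hgR hp0.le
    nlinarith [hqR, h1, h3, hX0, hp0.le, hn0.le, hgn,
      mul_le_mul_of_nonneg_right hgn hp0.le]
  · refine ⟨fun y => (((q * (y : ZMod p)).val : ℕ) : ℤ), ?_, ?_, ?_⟩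
    · -- InjOn
      intro x hx y hy h
      simp only [hX'def, Finset.coe_filter, Set.mem_setOf_eq] at hx hy
      obtain ⟨hxg, hxc⟩ := hx
      obtain ⟨hyg, hyc⟩ := hy
      have h' : (((q * (x:ZMod p)).val : ℕ) : ℤ) = (((q * (y:ZMod p)).val : ℕ) : ℤ) := h
      have hval : (q * (x:ZMod p)).val = (q * (y:ZMod p)).val := by exact_mod_cast h'
      have heq : q * (x:ZMod p) = q * (y:ZMod p) := ZMod.val_injective p hval
      have hq0 : q ≠ 0 := by
        intro hq'
        rw [hq', zero_mul, ZMod.val_zero] at hxc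
        simp at hxc
      have hxy : (x : ZMod p) = (y : ZMod p) := mul_left_cancel₀ hq0 heq
      have hdvd : (p:ℤ) ∣ (x - y) := by
        rw [← ZMod.intCast_zmod_eq_zero_iff_dvd]
        push_cast
        rw [sub_eq_zero]
        exact hxy
      by_contra hne
      exact ((hgoodprops x hxg).2 y (hgoodX hyg) (fun hyx => hne hyx.symm)) hdvd
    · -- compression
      intro x hx y hy z hz hrel
      simp only [hX'def, Finset.mem_filter, Finset.mem_Icc] at hx hy hz
      have key : ∀ w : ℤ, ((((q * (w:ZMod p)).val : ℕ) : ℤ) : ZMod p) = q * (w : ZMod p) := by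
        intro w
        rw [Int.cast_natCast, ZMod.natCast_val, ZMod.cast_id]
      have hdvd : (p:ℤ) ∣ ((((q * (x:ZMod p)).val : ℕ) : ℤ)
          - 2*(((q * (y:ZMod p)).val : ℕ) : ℤ) + (((q * (z:ZMod p)).val : ℕ) : ℤ)) := by
        rw [← ZMod.intCast_zmod_eq_zero_iff_dvd]
        have hr : ((x : ZMod p) - 2*(y:ZMod p) + (z:ZMod p)) = 0 := by
          have : ((x - 2*y + z : ℤ) : ZMod p) = ((0:ℤ) : ZMod p) := by rw [hrel]
          push_cast at this
          convert this using 1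
        push_cast [key]
        linear_combination q * hr
      have hab : (((q * (x:ZMod p)).val : ℕ) : ℤ)
          - 2*(((q * (y:ZMod p)).val : ℕ) : ℤ) + (((q * (z:ZMod p)).val : ℕ) : ℤ) = 0 := by
        apply Int.eq_zero_of_abs_lt_dvd hdvd
        have h1 := hx.2
        have h2 := hy.2
        have h3 := hz.2
        rw [abs_lt]
        constructor <;> omega
      linarith [hab]
    · -- range
      intro x hx
      beta_reduce
      simp only [hX'def, Finset.mem_filter, Finset.mem_Icc] at hx
      have hceil : ((2*M : ℕ) : ℤ) ≤ ⌈((6*C₁ : ℕ):ℝ) * n * Real.log n⌉ := by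
        have hn0R : (3:ℝ) ≤ n := by exact_mod_cast le_trans (by norm_num) hn100
        have hlog1 : 1 ≤ Real.log n := by
          rw [Real.le_log_iff_exp_le (by linarith)]
          linarith [Real.exp_one_lt_d9]
        have hkR : (k:ℝ) ≤ 2 * Real.log n := by
          have hpow : ((2^k : ℕ) : ℝ) ≤ (n:ℝ) := by
            exact_mod_cast hkdef ▸ Nat.pow_log_le_self 2 (by omega : n ≠ 0)
          have hlogle : Real.log ((2:ℝ)^k) ≤ Real.log n := by
            apply Real.log_le_log (by positivity)
            push_cast at hpow
            exact hpow
          rw [Real.log_pow] at hlogle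
          nlinarith [Real.log_two_gt_d9, Nat.cast_nonneg (α := ℝ) k]
        have h1 : ((2*M : ℕ) : ℝ) ≤ ((6*C₁ : ℕ):ℝ) * n * Real.log n := by
          push_cast [hMdef]
          have hk3 : (k:ℝ) + 1 ≤ 3 * Real.log n := by linarith
          have hfac : (0:ℝ) ≤ 2 * C₁ * n := by positivity
          calc 2 * ((C₁:ℝ) * n * (k+1)) = (2*C₁*n) * ((k:ℝ)+1) := by ring
            _ ≤ (2*C₁*n) * (3 * Real.log n) := mul_le_mul_of_nonneg_left hk3 hfac
            _ = 6*(C₁:ℝ) * n * Real.log n := by ring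
        calc ((2*M : ℕ) : ℤ) = ⌈(((2*M : ℕ) : ℤ) : ℝ)⌉ := (Int.ceil_intCast _).symm
          _ ≤ ⌈((6*C₁ : ℕ):ℝ) * n * Real.log n⌉ := by
              apply Int.ceil_le_ceil
              push_cast
              push_cast at h1
              exact h1
      rw [Finset.mem_Icc]
      have hvx := hx.2
      constructor
      · omega
      · have hmle : (m:ℤ) ≤ ((2*M:ℕ):ℤ) := by
          have : m ≤ 2*M := by omega
          exact_mod_cast this
        push_cast
        push_cast at hceil hmle
        omega
end

section
/- For every ε ∈ (3/4, 1) there exists a subpolynomial function h (i.e., h(n) = n^{o(1)}) such that every set X of n integers (n sufficiently large) contains a subset Y with |Y| ≤ εn such that X \ Y admits an injective compression into {1, ..., ⌈n·h(n)⌉}. -/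
/-- `h` is subpolynomial: `h n ≤ n ^ δ` eventually, for every `δ > 0`. -/
def Subpolynomial (h : ℕ → ℝ) : Prop :=
  ∀ δ : ℝ, 0 < δ → ∃ N : ℕ, ∀ n : ℕ, N ≤ n → h n ≤ (n : ℝ) ^ δ

/-!
Choose a prime `p` exceeding all differences of elements of `X`, and for `l : ZMod p` send `x` to
the residue `r x = (l * x).val ∈ [0, p)`. Keep those `x` with `2 r x < p` and `2 (r x % q) < q`:
there `x - 2y + z = 0` forces `r x + r z = 2 r y` with no wrap-around mod `p`, and then likewise
mod `q`, so `x ↦ r x % q + 1` is a compression into `[1, q]`. As `l` varies, `r x` is uniformly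
distributed for `x ≢ 0`, so about `n / 4` elements are kept on average, while a pair `x ≠ y`
collides mod `q` for at most `2p/q + 1` values of `l`. Deleting the colliding elements leaves, for
some `l`, at least `n / 4 - O(n² / q + n q / p)` elements. With `q ≈ 4n / (ε - 3/4)` and
`p ≥ 4q / (ε - 3/4)` this is at least `(1 - ε) n`, so `h` can even be taken constant.
-/

open Finset

theorem subpolynomial_const (C : ℝ) : Subpolynomial fun _ => C := fun _ hδ =>
  Filter.eventually_atTop.1 <|
    ((tendsto_rpow_atTop hδ).comp tendsto_natCast_atTop_atTop).eventually_ge_atTop C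

theorem IsCompressionOn.mono {S T : Finset ℤ} {c : ℤ → ℤ} (hc : IsCompressionOn T c)
    (hST : S ⊆ T) : IsCompressionOn S c := fun x hx y hy z hz =>
  hc x (hST hx) y (hST hy) z (hST hz)

theorem Nat.add_eq_two_mul_of_modEq {m a b c : ℕ} (h : a + c ≡ 2 * b [MOD m])
    (ha : 2 * a < m) (hb : 2 * b < m) (hc : 2 * c < m) : a + c = 2 * b :=
  h.eq_of_lt_of_lt (by omega) hb

theorem exists_prime_injOn_intCast (X : Finset ℤ) (B : ℕ) :
    ∃ p, p.Prime ∧ B ≤ p ∧ Set.InjOn (Int.cast : ℤ → ZMod p) X := by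
  obtain ⟨p, hp, hprime⟩ := Nat.exists_infinite_primes (B + 2 * X.sup Int.natAbs + 1)
  refine ⟨p, hprime, by omega, fun x hx y hy hxy => ?_⟩
  have hdvd : (p : ℤ) ∣ y - x := (ZMod.intCast_eq_intCast_iff_dvd_sub x y p).1 hxy
  have hlt : (y - x).natAbs < (p : ℤ).natAbs := by
    have := Int.natAbs_sub_le y x
    have := le_sup (f := Int.natAbs) hx
    have := le_sup (f := Int.natAbs) hy
    rw [Int.natAbs_natCast]
    omega
  have := Int.eq_zero_of_dvd_of_natAbs_lt_natAbs hdvd hlt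
  omega

namespace Compression

def window (p q : ℕ) : Finset ℕ := {u ∈ range p | 2 * u < p ∧ 2 * (u % q) < q}

section
variable {p : ℕ} (q : ℕ)

theorem le_four_mul_card_window_add (hq : 0 < q) : p ≤ 4 * #(window p q) + 2 * q := by
  set m := p / (2 * q)
  have hmaps : ∀ ji ∈ range m ×ˢ range ((q + 1) / 2), ji.1 * q + ji.2 ∈ window p q := by
    rintro ⟨j, i⟩ hji
    simp only [mem_product, mem_range] at hji
    have hjq : (j + 1) * q ≤ m * q := Nat.mul_le_mul_right q hji.1
    have hmq : m * (2 * q) ≤ p := Nat.div_mul_le_self p (2 * q)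
    have hmod : (j * q + i) % q = i := by
      rw [Nat.mul_comm, Nat.mul_add_mod, Nat.mod_eq_of_lt (by omega)]
    have hiq : i < q := by omega
    have hu : 2 * (j * q + i) < p := by linarith
    simp only [window, mem_filter, mem_range, hmod]
    exact ⟨by omega, hu, by omega⟩
  have hinj :
      Set.InjOn (fun ji : ℕ × ℕ => ji.1 * q + ji.2) ↑(range m ×ˢ range ((q + 1) / 2)) := by
    rintro ⟨j₁, i₁⟩ h₁ ⟨j₂, i₂⟩ h₂ h
    simp only [coe_product, coe_range, Set.mem_prod, Set.mem_Iio] at h₁ h₂ h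
    have hi : i₁ = i₂ := by
      have := congrArg (· % q) h
      simpa [Nat.mul_comm _ q, Nat.mul_add_mod, Nat.mod_eq_of_lt (show i₁ < q by omega),
        Nat.mod_eq_of_lt (show i₂ < q by omega)] using this
    subst hi
    simp only [Prod.mk.injEq, and_true]
    exact Nat.eq_of_mul_eq_mul_right hq (by omega)
  have hcard := card_le_card_of_injOn _ hmaps hinj
  rw [card_product, card_range, card_range] at hcard
  have hp : p < 2 * q * (m + 1) := Nat.lt_mul_div_succ p (by omega)
  have hq2 : q ≤ 2 * ((q + 1) / 2) := by omega
  nlinarith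

variable (X : Finset ℤ) (l : ZMod p)

def kept : Finset ℤ := {x ∈ X | (l * x).val ∈ window p q}

def collisions : Finset (ℤ × ℤ) :=
  {xy ∈ X.offDiag | (l * xy.1).val ≡ (l * xy.2).val [MOD q]}

def survivors : Finset ℤ := kept q X l \ (collisions q X l).image Prod.fst

def residueMap (x : ℤ) : ℤ := ((l * x).val % q : ℕ) + 1

theorem survivors_subset : survivors q X l ⊆ X :=
  sdiff_subset.trans (filter_subset _ _)

theorem card_kept_le : #(kept q X l) ≤ #(survivors q X l) + #(collisions q X l) := by
  have := le_card_sdiff ((collisions q X l).image Prod.fst) (kept q X l)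
  have := card_image_le (s := collisions q X l) (f := Prod.fst)
  rw [survivors]
  omega

theorem residueMap_mem_Icc (hq : 0 < q) (x : ℤ) : residueMap q l x ∈ Icc 1 (q : ℤ) := by
  have := Nat.mod_lt (l * x).val hq
  simp only [residueMap, mem_Icc]
  omega

theorem injOn_residueMap : Set.InjOn (residueMap q l) (survivors q X l) := by
  intro x hx y hy hxy
  by_contra hne
  simp only [survivors, coe_sdiff, Set.mem_sdiff, mem_coe, mem_image, not_exists, not_and] at hx hy
  have hmod : (l * x).val ≡ (l * y).val [MOD q] := by
    simp only [residueMap, add_left_inj, Nat.cast_inj] at hxy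
    exact hxy
  refine hx.2 (x, y) ?_ rfl
  simp only [collisions, kept, mem_filter, mem_offDiag] at hx hy ⊢
  exact ⟨⟨hx.1.1, hy.1.1, hne⟩, hmod⟩

variable [NeZero p]

theorem isCompressionOn_kept : IsCompressionOn (kept q X l) (residueMap q l) := by
  intro x hx y hy z hz hxyz
  simp only [kept, window, mem_filter, mem_range] at hx hy hz
  have hp : (l * x).val + (l * z).val ≡ 2 * (l * y).val [MOD p] := by
    rw [← ZMod.natCast_eq_natCast_iff]
    have h0 : ((x - 2 * y + z : ℤ) : ZMod p) = 0 := by rw [hxyz, Int.cast_zero]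
    push_cast at h0 ⊢
    simp only [ZMod.natCast_zmod_val]
    linear_combination l * h0
  have hp' := Nat.add_eq_two_mul_of_modEq hp hx.2.2.1 hy.2.2.1 hz.2.2.1
  have hq : (l * x).val % q + (l * z).val % q ≡ 2 * ((l * y).val % q) [MOD q] :=
    calc (l * x).val % q + (l * z).val % q ≡ (l * x).val + (l * z).val [MOD q] :=
          (Nat.mod_modEq _ q).add (Nat.mod_modEq _ q)
      _ = 2 * (l * y).val := hp'
      _ ≡ 2 * ((l * y).val % q) [MOD q] := ((Nat.mod_modEq _ q).mul_left 2).symm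
  have hq' := Nat.add_eq_two_mul_of_modEq hq hx.2.2.2 hy.2.2.2 hz.2.2.2
  simp only [residueMap]
  omega

end

section
variable {p : ℕ} [Fact p.Prime]

theorem card_filter_val_mul_mem {d : ZMod p} (hd : d ≠ 0) {W : Finset ℕ} (hW : W ⊆ range p) :
    #{l : ZMod p | (l * d).val ∈ W} = #W := by
  rw [card_equiv (t := {u : ZMod p | u.val ∈ W}) (Equiv.mulRight₀ d hd) (by simp)]
  have hval : ∀ w ∈ W, (w : ZMod p).val = w := fun w hw =>
    ZMod.val_cast_of_lt (mem_range.1 (hW hw))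
  exact card_nbij' ZMod.val (fun w => (w : ZMod p)) (fun u hu => by simpa using hu)
    (fun w hw => by simpa [hval w hw] using hw) (fun u _ => ZMod.natCast_zmod_val u)
    (fun w hw => hval w hw)

theorem card_le_card_filter_val_mul_mem (d : ZMod p) {W : Finset ℕ} (hW : W ⊆ range p)
    (h0 : 0 ∈ W) : #W ≤ #{l : ZMod p | (l * d).val ∈ W} := by
  rcases eq_or_ne d 0 with rfl | hd
  · simpa [h0] using (card_le_card hW).trans_eq (card_range p)
  · exact (card_filter_val_mul_mem hd hW).ge

theorem card_filter_val_mul_modEq_le {x y : ZMod p} (hxy : x ≠ y) {q : ℕ} (hq : 0 < q) :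
    #{l : ZMod p | (l * x).val ≡ (l * y).val [MOD q]} ≤ 2 * p / q + 1 := by
  -- `g l ≡ l * (x - y) [MOD p]`, so `g` is injective, and a collision forces `g l ≡ p [MOD q]`.
  set g : ZMod p → ℕ := fun l => (l * x).val + p - (l * y).val
  have hcast : ∀ l, (g l : ZMod p) = l * (x - y) := fun l => by
    have := (l * y).val_lt
    simp only [g, Nat.cast_sub (show (l * y).val ≤ (l * x).val + p by omega), Nat.cast_add,
      ZMod.natCast_zmod_val, ZMod.natCast_self]
    ring
  have hmaps : ∀ l ∈ ({l : ZMod p | (l * x).val ≡ (l * y).val [MOD q]} : Finset _),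
      g l ∈ ({t ∈ range (2 * p) | t ≡ p [MOD q]} : Finset ℕ) := by
    intro l hl
    have hx := (l * x).val_lt
    have hy := (l * y).val_lt
    simp only [mem_filter, mem_univ, true_and] at hl
    simp only [mem_filter, mem_range]
    refine ⟨show (l * x).val + p - (l * y).val < 2 * p by omega,
      Nat.ModEq.add_right_cancel' (l * y).val ?_⟩
    rw [show (l * x).val + p - (l * y).val + (l * y).val = (l * x).val + p by omega, add_comm p]
    exact hl.add_right p
  have hinj : Set.InjOn g ↑({l : ZMod p | (l * x).val ≡ (l * y).val [MOD q]} : Finset _) :=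
    fun l₁ _ l₂ _ h => mul_right_cancel₀ (sub_ne_zero.2 hxy) (by rw [← hcast, ← hcast, h])
  refine (card_le_card_of_injOn g hmaps hinj).trans ?_
  rw [← Nat.count_eq_card_filter_range, Nat.count_modEq_card _ hq]
  split_ifs <;> omega

variable (q : ℕ) (X : Finset ℤ)

theorem card_mul_card_window_le_sum_card_kept (hq : 0 < q) :
    #X * #(window p q) ≤ ∑ l : ZMod p, #(kept q X l) := by
  have hdouble : ∑ l : ZMod p, #(kept q X l) =
      ∑ x ∈ X, #{l : ZMod p | (l * x).val ∈ window p q} :=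
    sum_card_bipartiteAbove_eq_sum_card_bipartiteBelow _
  rw [hdouble, ← smul_eq_mul]
  exact card_nsmul_le_sum _ _ _ fun x _ => card_le_card_filter_val_mul_mem _ (filter_subset _ _)
    (by simp [window, hq, (Fact.out : p.Prime).pos])

theorem sum_card_collisions_le (hq : 0 < q) (hX : Set.InjOn (Int.cast : ℤ → ZMod p) X) :
    ∑ l : ZMod p, #(collisions q X l) ≤ #X * #X * (2 * p / q + 1) := by
  have hdouble : ∑ l : ZMod p, #(collisions q X l) =
      ∑ xy ∈ X.offDiag, #{l : ZMod p | (l * xy.1).val ≡ (l * xy.2).val [MOD q]} :=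
    sum_card_bipartiteAbove_eq_sum_card_bipartiteBelow _
  rw [hdouble]
  refine (sum_le_card_nsmul _ _ (2 * p / q + 1) fun xy hxy => ?_).trans ?_
  · rw [mem_offDiag] at hxy
    exact card_filter_val_mul_modEq_le (fun h => hxy.2.2 (hX hxy.1 hxy.2.1 h)) hq
  · rw [smul_eq_mul, offDiag_card]
    exact Nat.mul_le_mul_right _ (Nat.sub_le _ _)

end

variable {p : ℕ} [Fact p.Prime] {q : ℕ} {X : Finset ℤ}

theorem exists_survivors_large (hq : 0 < q) (hX : Set.InjOn (Int.cast : ℤ → ZMod p) X) :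
    ∃ l : ZMod p, #X * #(window p q) ≤ p * #(survivors q X l) + #X * #X * (2 * p / q + 1) := by
  have hsum : ∑ l : ZMod p, (#X * #(window p q) + p * #(collisions q X l)) ≤
      ∑ l : ZMod p, (p * #(kept q X l) + #X * #X * (2 * p / q + 1)) := by
    simp only [sum_add_distrib, ← mul_sum, sum_const, card_univ, ZMod.card, smul_eq_mul]
    have := card_mul_card_window_le_sum_card_kept q X hq (p := p)
    have := sum_card_collisions_le q X hq hX
    nlinarith
  obtain ⟨l, -, hl⟩ := exists_le_of_sum_le univ_nonempty hsum
  have := card_kept_le q X l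
  exact ⟨l, by nlinarith⟩

theorem exists_injOn_compression (hq : 0 < q) (hX : Set.InjOn (Int.cast : ℤ → ZMod p) X) :
    ∃ S ⊆ X, ∃ c : ℤ → ℤ, Set.InjOn c S ∧ IsCompressionOn S c ∧
      (∀ x ∈ S, c x ∈ Icc 1 (q : ℤ)) ∧
      #X * p ≤ 4 * p * #S + 2 * #X * q + 4 * (#X * #X * (2 * p / q + 1)) := by
  obtain ⟨l, hl⟩ := exists_survivors_large hq hX
  refine ⟨survivors q X l, survivors_subset q X l, residueMap q l, injOn_residueMap q X l,
    (isCompressionOn_kept q X l).mono sdiff_subset, fun x _ => residueMap_mem_Icc q l hq x, ?_⟩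
  have := Nat.mul_le_mul_left #X (le_four_mul_card_window_add (p := p) q hq)
  nlinarith

end Compression

theorem quarter_sub_mul_le_of_bound {n s p q k γ : ℝ} (hγ : 0 < γ) (hγ' : γ < 1 / 4)
    (hn : 0 ≤ n) (hs : 0 ≤ s) (hk : 0 ≤ k) (hkq : k * q ≤ 2 * p) (hq : 4 / γ * n ≤ q)
    (hp : 4 / γ * q ≤ p) (h : n * p ≤ 4 * p * s + 2 * n * q + 4 * (n * n * (k + 1))) :
    (1 / 4 - γ) * n ≤ s := by
  set C := 4 / γ
  have hCγ : C * γ = 4 := div_mul_cancel₀ 4 hγ.ne'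
  have hC : 16 < C := by rw [lt_div_iff₀ hγ]; linarith
  have hq0 : 0 ≤ q := le_trans (by positivity) hq
  rcases (le_trans (by positivity) hp : (0 : ℝ) ≤ p).eq_or_lt with rfl | hp0
  · nlinarith
  have h1 : C * (2 * n * q) ≤ 2 * n * p := by
    nlinarith [mul_le_mul_of_nonneg_left hp (by positivity : (0 : ℝ) ≤ 2 * n)]
  have h2 : C * (4 * (n * n * k)) ≤ 8 * n * p := by
    nlinarith [mul_le_mul_of_nonneg_left hq (by positivity : (0 : ℝ) ≤ 4 * n * k),
      mul_le_mul_of_nonneg_left hkq (by positivity : (0 : ℝ) ≤ 4 * n)]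
  have h3 : C * C * (4 * (n * n)) ≤ 4 * n * p := by
    nlinarith [mul_le_mul_of_nonneg_left hq (by positivity : (0 : ℝ) ≤ 4 * n * C),
      mul_le_mul_of_nonneg_left hp (by positivity : (0 : ℝ) ≤ 4 * n)]
  have h4 : 16 * (C * (4 * (n * n))) ≤ C * C * (4 * (n * n)) := by
    nlinarith [mul_le_mul_of_nonneg_right hC.le (by positivity : (0 : ℝ) ≤ C * (4 * (n * n)))]
  have key : 2 * n * q + 4 * (n * n * (k + 1)) ≤ 4 * γ * n * p := by
    have e : C * (4 * γ * n * p) = 16 * (n * p) := by linear_combination 4 * n * p * hCγ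
    refine le_of_mul_le_mul_left ?_ (by positivity : (0 : ℝ) < C)
    nlinarith [mul_nonneg hn hp0.le]
  nlinarith

theorem compression_hypothesis_special_case :
    ∀ ε : ℝ, 3 / 4 < ε → ε < 1 →
      ∃ h : ℕ → ℝ, Subpolynomial h ∧
        ∃ N : ℕ, ∀ n : ℕ, N ≤ n → ∀ X : Finset ℤ, X.card = n →
          ∃ Y ⊆ X, (Y.card : ℝ) ≤ ε * n ∧
            ∃ c : ℤ → ℤ, Set.InjOn c ((X \ Y : Finset ℤ) : Set ℤ) ∧
              IsCompressionOn (X \ Y) c ∧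
              ∀ x ∈ X \ Y, c x ∈ Finset.Icc (1 : ℤ) ⌈(n : ℝ) * h n⌉ := by
  intro ε hε hε'
  have hγ : 0 < ε - 3 / 4 := by linarith
  refine ⟨fun _ => 4 / (ε - 3 / 4), subpolynomial_const _, 1, fun n hn X hX => ?_⟩
  set q := ⌈(n : ℝ) * (4 / (ε - 3 / 4))⌉₊
  have hnq : 4 / (ε - 3 / 4) * n ≤ q := mul_comm (n : ℝ) _ ▸ Nat.le_ceil _
  have hq : 0 < q := Nat.cast_pos.1 <| lt_of_lt_of_le (by positivity) hnq
  obtain ⟨p, hp, hqp, hX'⟩ := exists_prime_injOn_intCast X ⌈4 / (ε - 3 / 4) * q⌉₊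
  have : Fact p.Prime := ⟨hp⟩
  obtain ⟨S, hSX, c, hc_inj, hc, hc_mem, hS⟩ := Compression.exists_injOn_compression hq hX'
  have hXS : X \ (X \ S) = S := Finset.sdiff_sdiff_eq_self hSX
  refine ⟨X \ S, sdiff_subset, ?_, c, by rwa [hXS], by rwa [hXS], fun x hx => ?_⟩
  · have hkq : ((2 * p / q : ℕ) : ℝ) * q ≤ 2 * p := by exact_mod_cast Nat.div_mul_le_self _ q
    have hqp' : 4 / (ε - 3 / 4) * q ≤ p := (Nat.le_ceil _).trans (by exact_mod_cast hqp)
    have := quarter_sub_mul_le_of_bound hγ (by linarith) (Nat.cast_nonneg n)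
      (Nat.cast_nonneg #S) (Nat.cast_nonneg _) hkq hnq hqp' (by rw [← hX]; exact_mod_cast hS)
    rw [card_sdiff_of_subset hSX, Nat.cast_sub (card_le_card hSX), hX]
    linarith
  · rw [← Int.natCast_ceil_eq_ceil (by positivity)]
    exact hc_mem x (hXS ▸ hx)
end

section
/- For all natural numbers a, b ≥ 1 and all k ≥ 3: ρ_k(3ab) ≥ ρ_3(a)·ρ_k(b)/3, where ρ_k(n) = g_k(n)/n and g_k(n) is the maximum size of a subset of {1,...,n} containing no nontrivial k-term arithmetic progression. -/
/-- A finite set of integers contains no nontrivial `k`-term arithmetic progression. -/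
def KAPFree (k : ℕ) (S : Finset ℤ) : Prop :=
  ∀ x d : ℤ, d ≠ 0 → ¬ (∀ i ∈ Finset.range k, x + (i : ℤ) * d ∈ S)

/-- `gk k n` : maximum size of a subset of `{1,…,n}` with no nontrivial `k`-AP. -/
noncomputable def gk (k n : ℕ) : ℕ :=
  sSup {m | ∃ S ⊆ Finset.Icc (1 : ℤ) n, KAPFree k S ∧ S.card = m}

/-- `rho k n = gk k n / n`, the density of a maximal `k`-AP-free subset of `{1,…,n}`. -/
noncomputable def rho (k n : ℕ) : ℝ := (gk k n : ℝ) / n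

lemma gk_bddAbove (k n : ℕ) :
    BddAbove {m | ∃ S ⊆ Finset.Icc (1 : ℤ) n, KAPFree k S ∧ S.card = m} := by
  refine ⟨(Finset.Icc (1 : ℤ) n).card, ?_⟩
  rintro m ⟨S, hS, -, rfl⟩
  exact Finset.card_le_card hS

lemma exists_gk (k n : ℕ) (hk : 1 ≤ k) :
    ∃ S ⊆ Finset.Icc (1 : ℤ) n, KAPFree k S ∧ S.card = gk k n := by
  have hne : {m | ∃ S ⊆ Finset.Icc (1 : ℤ) n, KAPFree k S ∧ S.card = m}.Nonempty := by
    refine ⟨0, ∅, by simp, ?_, rfl⟩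
    intro x d hd h
    have := h 0 (Finset.mem_range.mpr hk)
    simp at this
  have := Nat.sSup_mem hne (gk_bddAbove k n)
  exact this

lemma le_gk {k n : ℕ} {S : Finset ℤ} (hS : S ⊆ Finset.Icc (1 : ℤ) n) (h : KAPFree k S) :
    S.card ≤ gk k n :=
  le_csSup (gk_bddAbove k n) ⟨S, hS, h, rfl⟩

/-- Uniqueness of the decomposition `d = (x₁ - x₂) + 3a·m` with `x₁, x₂ ∈ [1,a]`. -/
lemma decomp_unique {a : ℕ} (ha : 1 ≤ a) {x1 x2 x1' x2' m m' : ℤ}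
    (hx1 : 1 ≤ x1) (hx1' : x1 ≤ a) (hx2 : 1 ≤ x2) (hx2' : x2 ≤ a)
    (hy1 : 1 ≤ x1') (hy1' : x1' ≤ a) (hy2 : 1 ≤ x2') (hy2' : x2' ≤ a)
    (heq : x1 - x2 + 3 * a * m = x1' - x2' + 3 * a * m') :
    x1 - x2 = x1' - x2' ∧ m = m' := by
  have haZ : (1 : ℤ) ≤ a := by exact_mod_cast ha
  have hdvd : (3 * (a : ℤ)) ∣ ((x1 - x2) - (x1' - x2')) :=
    ⟨m' - m, by linear_combination heq⟩
  have h0 : (x1 - x2) - (x1' - x2') = 0 := by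
    refine Int.eq_zero_of_abs_lt_dvd hdvd ?_
    rw [abs_lt]
    constructor <;> linarith
  refine ⟨by linarith, ?_⟩
  have : 3 * (a : ℤ) * m = 3 * a * m' := by linarith
  have h3a : (3 : ℤ) * a ≠ 0 := by positivity
  exact mul_left_cancel₀ h3a this

lemma gk_mul_le (a b k : ℕ) (ha : 1 ≤ a) (hb : 1 ≤ b) (hk : 3 ≤ k) :
    gk 3 a * gk k b ≤ gk k (3 * a * b) := by
  obtain ⟨A, hA, hAf, hAc⟩ := exists_gk 3 a (by norm_num)
  obtain ⟨B, hB, hBf, hBc⟩ := exists_gk k b (by omega)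
  have hAmem : ∀ x ∈ A, 1 ≤ x ∧ x ≤ (a : ℤ) := fun x hx => Finset.mem_Icc.mp (hA hx)
  have hBmem : ∀ y ∈ B, 1 ≤ y ∧ y ≤ (b : ℤ) := fun y hy => Finset.mem_Icc.mp (hB hy)
  have haZ : (1 : ℤ) ≤ a := by exact_mod_cast ha
  have hbZ : (1 : ℤ) ≤ b := by exact_mod_cast hb
  set f : ℤ × ℤ → ℤ := fun p => p.1 + 3 * a * (p.2 - 1) with hf
  set T : Finset ℤ := (A ×ˢ B).image f with hT
  have hinj : Set.InjOn f ↑(A ×ˢ B) := by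
    rintro ⟨x1, y1⟩ hp ⟨x2, y2⟩ hq hpq
    simp only [Finset.coe_product, Set.mem_prod, Finset.mem_coe] at hp hq
    obtain ⟨hx11, hx12⟩ := hAmem _ hp.1
    obtain ⟨hy11, hy12⟩ := hBmem _ hp.2
    obtain ⟨hx21, hx22⟩ := hAmem _ hq.1
    obtain ⟨hy21, hy22⟩ := hBmem _ hq.2
    simp only [hf] at hpq
    have := decomp_unique (x2 := x2) (x1' := x1) (x2' := x1) (m := y1 - 1) (m' := y2 - 1)
      ha hx11 hx12 hx21 hx22 hx11 hx12 hx11 hx12 (by linarith)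
    have hx : x1 = x2 := by
      have := this.1; linarith
    have hy : y1 = y2 := by
      have := this.2; linarith
    simp [hx, hy]
  -- T ⊆ Icc 1 (3ab)
  have hTsub : T ⊆ Finset.Icc (1 : ℤ) ((3 * a * b : ℕ) : ℤ) := by
    intro t ht
    simp only [hT, Finset.mem_image, Finset.mem_product] at ht
    obtain ⟨⟨x, y⟩, ⟨hx, hy⟩, rfl⟩ := ht
    obtain ⟨hx1, hx2⟩ := hAmem _ hx
    obtain ⟨hy1, hy2⟩ := hBmem _ hy
    rw [Finset.mem_Icc]
    push_cast
    simp only [hf]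
    have h1 : (0:ℤ) ≤ 3 * (a:ℤ) * (y - 1) := by exact mul_nonneg (by linarith) (by linarith)
    constructor
    · nlinarith
    · nlinarith [mul_le_mul_of_nonneg_left (show y - 1 ≤ (b:ℤ) - 1 by linarith) (show (0:ℤ) ≤ 3 * a by linarith)]
  -- T is k-AP-free
  have hTfree : KAPFree k T := by
    intro s d hd hmem
    have hex : ∀ i : ℕ, ∃ p : ℤ × ℤ, i < k →
        p.1 ∈ A ∧ p.2 ∈ B ∧ p.1 + 3 * a * (p.2 - 1) = s + (i : ℤ) * d := by
      intro i
      by_cases hi : i < k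
      · have := hmem i (Finset.mem_range.mpr hi)
        simp only [hT, Finset.mem_image, Finset.mem_product] at this
        obtain ⟨⟨x, y⟩, ⟨hx, hy⟩, hxy⟩ := this
        exact ⟨(x, y), fun _ => ⟨hx, hy, hxy⟩⟩
      · exact ⟨(1, 1), fun h => absurd h hi⟩
    choose p hp using hex
    set X : ℕ → ℤ := fun i => (p i).1 with hX
    set Y : ℕ → ℤ := fun i => (p i).2 with hY
    have heqn : ∀ i, i < k → X i + 3 * a * (Y i - 1) = s + (i : ℤ) * d :=
      fun i hi => (hp i hi).2.2
    have hXA : ∀ i, i < k → X i ∈ A := fun i hi => (hp i hi).1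
    have hYB : ∀ i, i < k → Y i ∈ B := fun i hi => (hp i hi).2.1
    set e : ℤ := X 1 - X 0 with he
    set m : ℤ := Y 1 - Y 0 with hm
    -- step : for i+1 < k, consecutive differences are e and m
    have hstep : ∀ i, i + 1 < k → X (i + 1) - X i = e ∧ Y (i + 1) - Y i = m := by
      intro i hi
      have h1 := heqn i (by omega)
      have h2 := heqn (i + 1) hi
      have h0 := heqn 0 (by omega)
      have h1' := heqn 1 (by omega)
      push_cast at h2 h1' h0 h1
      obtain ⟨hX1, hX2⟩ := hAmem _ (hXA (i + 1) hi)
      obtain ⟨hX3, hX4⟩ := hAmem _ (hXA i (by omega))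
      obtain ⟨hX5, hX6⟩ := hAmem _ (hXA 1 (by omega))
      obtain ⟨hX7, hX8⟩ := hAmem _ (hXA 0 (by omega))
      have hu := decomp_unique (a := a) (x1 := X (i + 1)) (x2 := X i)
        (x1' := X 1) (x2' := X 0) (m := Y (i + 1) - Y i) (m' := Y 1 - Y 0)
        ha hX1 hX2 hX3 hX4 hX5 hX6 hX7 hX8 (by linarith)
      exact ⟨hu.1, hu.2⟩
    have hXi : ∀ i, i < k → X i = X 0 + (i : ℤ) * e := by
      intro i
      induction i with
      | zero => intro _; simp
      | succ n ih =>
        intro hn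
        have h := (hstep n hn).1
        have := ih (by omega)
        push_cast
        linarith
    have hYi : ∀ i, i < k → Y i = Y 0 + (i : ℤ) * m := by
      intro i
      induction i with
      | zero => intro _; simp
      | succ n ih =>
        intro hn
        have h := (hstep n hn).2
        have := ih (by omega)
        push_cast
        linarith
    by_cases hee : e = 0
    · -- then d = 3a·m, m ≠ 0, and Y is a k-AP in B
      have h0 := heqn 0 (by omega)
      have h1 := heqn 1 (by omega)
      push_cast at h0 h1
      have hd3 : d = 3 * a * m := by
        have : e + 3 * a * m = d := by simp only [he, hm]; linarith
        rw [hee] at this; linarith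
      have hmne : m ≠ 0 := by
        intro h
        apply hd
        rw [hd3, h, mul_zero]
      refine hBf (Y 0) m hmne ?_
      intro i hi
      rw [Finset.mem_range] at hi
      have := hYi i hi
      rw [← this]
      exact hYB i hi
    · -- e ≠ 0 : X gives a 3-AP in A
      refine hAf (X 0) e hee ?_
      intro i hi
      rw [Finset.mem_range] at hi
      have hik : i < k := by omega
      have := hXi i hik
      rw [← this]
      exact hXA i hik
  have hcard : T.card = gk 3 a * gk k b := by
    rw [hT, Finset.card_image_of_injOn hinj, Finset.card_product, hAc, hBc]
  calc gk 3 a * gk k b = T.card := hcard.symm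
    _ ≤ gk k (3 * a * b) := le_gk hTsub hTfree

theorem rho_lower_bound (a b k : ℕ) (ha : 1 ≤ a) (hb : 1 ≤ b) (hk : 3 ≤ k) :
    rho 3 a * rho k b / 3 ≤ rho k (3 * a * b) := by
  have key := gk_mul_le a b k ha hb hk
  have haR : (0 : ℝ) < a := by exact_mod_cast ha
  have hbR : (0 : ℝ) < b := by exact_mod_cast hb
  have h1 : rho 3 a * rho k b / 3 = (gk 3 a : ℝ) * (gk k b) / (3 * a * b) := by
    unfold rho
    rw [div_mul_div_comm, div_div]
    congr 1
    ring
  have h2 : rho k (3 * a * b) = (gk k (3 * a * b) : ℝ) / (3 * a * b) := by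
    unfold rho
    push_cast
    ring
  rw [h1, h2]
  exact (div_le_div_iff_of_pos_right (by positivity)).mpr (by exact_mod_cast key)
end

section
/- Let A ⊆ {1,...,a} be 3-AP-free and B ⊆ {1,...,b} be k-AP-free. Then the set S = { 3b(i-1) + b + j : i ∈ A, j ∈ B } ⊆ {1,...,3ab} is k-AP-free and has cardinality |A|·|B|. -/
open Finset

private lemma block_key (b : ℕ) (i i' j j' : ℤ) (hj1 : 1 ≤ j) (hj2 : j ≤ b)
    (hj1' : 1 ≤ j') (hj2' : j' ≤ b)
    (h : 3 * (b : ℤ) * (i - 1) + b + j = 3 * (b : ℤ) * (i' - 1) + b + j') :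
    i = i' ∧ j = j' := by
  have hb : (1 : ℤ) ≤ b := le_trans hj1 hj2
  have hdvd : (3 * (b : ℤ)) ∣ (j' - j) := ⟨i - i', by linear_combination -h⟩
  have habs : |j' - j| < 3 * (b : ℤ) := abs_lt.mpr ⟨by linarith, by linarith⟩
  have hz : j' - j = 0 := Int.eq_zero_of_abs_lt_dvd hdvd habs
  constructor
  · have h3 : 3 * (b : ℤ) * (i - i') = 0 := by linarith [hz]
    have := mul_eq_zero.mp h3
    rcases this with h' | h'
    · exfalso; linarith
    · linarith [sub_eq_zero.mp h']
  · linarith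

theorem block_construction_kAPFree (a b k : ℕ) (hk : 3 ≤ k)
    (A B : Finset ℤ) (hA : A ⊆ Finset.Icc (1 : ℤ) a) (hB : B ⊆ Finset.Icc (1 : ℤ) b)
    (hAfree : KAPFree 3 A) (hBfree : KAPFree k B) :
    let S : Finset ℤ :=
      (A ×ˢ B).image (fun p => 3 * (b : ℤ) * (p.1 - 1) + (b : ℤ) + p.2)
    S ⊆ Finset.Icc (1 : ℤ) (3 * a * b) ∧ KAPFree k S ∧ S.card = A.card * B.card := by
  intro S
  have hS : ∀ s : ℤ, s ∈ S ↔ ∃ i ∈ A, ∃ j ∈ B, 3 * (b : ℤ) * (i - 1) + b + j = s := by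
    intro s
    simp only [S, mem_image, mem_product, Prod.exists]
    constructor
    · rintro ⟨i, j, ⟨hi, hj⟩, he⟩; exact ⟨i, hi, j, hj, he⟩
    · rintro ⟨i, hi, j, hj, he⟩; exact ⟨i, j, ⟨hi, hj⟩, he⟩
  have hAbd : ∀ i ∈ A, 1 ≤ i ∧ i ≤ (a : ℤ) := fun i hi => mem_Icc.mp (hA hi)
  have hBbd : ∀ j ∈ B, 1 ≤ j ∧ j ≤ (b : ℤ) := fun j hj => mem_Icc.mp (hB hj)
  refine ⟨?_, ?_, ?_⟩
  · -- subset
    intro s hs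
    obtain ⟨i, hi, j, hj, he⟩ := (hS s).mp hs
    obtain ⟨hi1, hi2⟩ := hAbd i hi
    obtain ⟨hj1, hj2⟩ := hBbd j hj
    have hb : (1 : ℤ) ≤ b := le_trans hj1 hj2
    rw [mem_Icc]
    constructor
    · nlinarith
    · nlinarith
  · -- k-AP-free
    intro x d hd h
    have h0 := (hS _).mp (h 0 (mem_range.mpr (by omega)))
    have h1 := (hS _).mp (h 1 (mem_range.mpr (by omega)))
    have h2 := (hS _).mp (h 2 (mem_range.mpr (by omega)))
    obtain ⟨i0, hi0, j0, hj0, e0⟩ := h0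
    obtain ⟨i1, hi1, j1, hj1, e1⟩ := h1
    obtain ⟨i2, hi2, j2, hj2, e2⟩ := h2
    push_cast at e0 e1 e2
    obtain ⟨hj01, hj02⟩ := hBbd j0 hj0
    obtain ⟨hj11, hj12⟩ := hBbd j1 hj1
    obtain ⟨hj21, hj22⟩ := hBbd j2 hj2
    have hb : (1 : ℤ) ≤ b := le_trans hj01 hj02
    by_cases hii : i0 = i1
    · -- same block: |d| ≤ b - 1, everything stays in block i0
      have hdb : d = j1 - j0 := by
        subst hii
        linarith [e0, e1]
      have main : ∀ t : ℕ, t < k →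
          (j0 + (t : ℤ) * d ∈ B ∧ x + (t : ℤ) * d = 3 * (b : ℤ) * (i0 - 1) + b + (j0 + t * d)) := by
        intro t
        induction t with
        | zero =>
          intro _
          refine ⟨by simpa using hj0, by push_cast; linarith⟩
        | succ t ih =>
          intro ht
          obtain ⟨hjB, heq⟩ := ih (by omega)
          obtain ⟨hjt1, hjt2⟩ := hBbd _ hjB
          obtain ⟨i', hi', j', hj', he'⟩ := (hS _).mp (h (t + 1) (mem_range.mpr ht))
          obtain ⟨hj1', hj2'⟩ := hBbd j' hj'
          push_cast at he'
          have hcomb : 3 * (b : ℤ) * (i' - 1) + b + j' =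
              3 * (b : ℤ) * (i0 - 1) + b + (j0 + (t : ℤ) * d + d) := by
            push_cast
            linarith [he', heq]
          have hbnd1 : 1 ≤ j0 + (t : ℤ) * d + d ∨ True := Or.inr trivial
          -- bounds on j0 + t*d + d : in [1-(b-1)... ]; we don't have 1 ≤ it directly.
          -- use block_key in the other direction: need bounds on both sides.
          -- j0 + t*d ∈ [1,b], d = j1 - j0 ∈ [-(b-1), b-1]
          have hdlo : -(b - 1 : ℤ) ≤ d := by rw [hdb]; linarith
          have hdhi : d ≤ (b - 1 : ℤ) := by rw [hdb]; linarith
          -- from hcomb: 3b(i'-i0) = j0+td+d - j', with |j0+td+d-j'| ≤ 2b-2 < 3b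
          have hdvd : (3 * (b : ℤ)) ∣ (j0 + (t : ℤ) * d + d - j') :=
            ⟨i' - i0, by linear_combination -hcomb⟩
          have habs : |j0 + (t : ℤ) * d + d - j'| < 3 * (b : ℤ) :=
            abs_lt.mpr ⟨by linarith, by linarith⟩
          have hz : j0 + (t : ℤ) * d + d - j' = 0 := Int.eq_zero_of_abs_lt_dvd hdvd habs
          have hj'eq : j' = j0 + ((t : ℤ) + 1) * d := by linarith
          constructor
          · push_cast
            rw [show j0 + ((t : ℕ) + 1 : ℤ) * d = j' by push_cast; linear_combination hz]
            exact hj'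
          · push_cast
            have hieq : i' = i0 := by
              have h3 : 3 * (b : ℤ) * (i' - i0) = 0 := by linear_combination hcomb + hz
              rcases mul_eq_zero.mp h3 with h' | h'
              · exfalso; linarith
              · linarith [sub_eq_zero.mp h']
            rw [hieq] at he'
            linarith [he']
      refine hBfree j0 d hd ?_
      intro t ht
      exact (main t (mem_range.mp ht)).1
    · -- different blocks: i0, i1, i2 is a 3-AP in A
      have hkey : i0 + i2 = 2 * i1 := by
        have hdvd : (3 * (b : ℤ)) ∣ (2 * j1 - j0 - j2) :=
          ⟨i0 + i2 - 2 * i1, by linear_combination 2 * e1 - e0 - e2⟩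
        have habs : |2 * j1 - j0 - j2| < 3 * (b : ℤ) :=
          abs_lt.mpr ⟨by linarith, by linarith⟩
        have hz : 2 * j1 - j0 - j2 = 0 := Int.eq_zero_of_abs_lt_dvd hdvd habs
        have h3 : 3 * (b : ℤ) * (i0 + i2 - 2 * i1) = 0 := by
          linear_combination e0 + e2 - 2 * e1 + hz
        rcases mul_eq_zero.mp h3 with h' | h'
        · exfalso; linarith
        · linarith [sub_eq_zero.mp h']
      refine hAfree i0 (i1 - i0) (sub_ne_zero.mpr (Ne.symm hii)) ?_
      intro t ht
      rw [mem_range] at ht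
      interval_cases t
      · simpa using hi0
      · simpa using hi1
      · have : i0 + 2 * (i1 - i0) = i2 := by linarith
        push_cast
        rw [show i0 + 2 * (i1 - i0) = i2 by linarith]
        exact hi2
  · -- cardinality
    have hinj : Set.InjOn (fun p : ℤ × ℤ => 3 * (b : ℤ) * (p.1 - 1) + b + p.2)
        ↑(A ×ˢ B) := by
      rintro ⟨i, j⟩ hp ⟨i', j'⟩ hp' he
      rw [Finset.mem_coe, Finset.mem_product] at hp hp'
      simp only at he
      obtain ⟨hj1, hj2⟩ := hBbd j hp.2
      obtain ⟨hj1', hj2'⟩ := hBbd j' hp'.2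
      obtain ⟨h1, h2⟩ := block_key b i i' j j' hj1 hj2 hj1' hj2' he
      exact Prod.ext h1 h2
    simp only [S]
    rw [card_image_of_injOn hinj, card_product]
end
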